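/- arXiv:2008.05604 — 9 statements merged into one kernel-verified Lean document; each statement's English description precedes it below -/
import Mathlib

section
/- Let a_n be a sequence of positive reals, t(x,y) = 4(1-x)(1-y) - (1-xy)^2, and u_n = a_{n-1}a_{n+1}/a_n^2. Suppose there exist N and sequences f_n, g_n such that for all n ≥ N, g_n < u_n < f_n and t(g_n,g_{n+1}) > 0, t(g_n,f_{n+1}) > 0, t(f_n,g_{n+1}) > 0, t(f_n,f_{n+1}) > 0. Then for all n ≥ N, a_n satisfies the higher order Turán inequality: 4(a_n^2 - a_{n-1}a_{n+1})(a_{n+1}^2 - a_n a_{n+2}) - (a_n a_{n+1} - a_{n-1} a_{n+2})^2 > 0. -/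
/-!
The higher order Turán expression at `n` equals `a n ^ 2 * a (n+1) ^ 2 * t (u n) (u (n+1))`, so it
suffices that `t (u n) (u (n+1)) > 0`. For fixed `y`, `x ↦ t x y` is a quadratic with leading
coefficient `-y ^ 2`, hence concave, so positivity at both ends of an interval gives positivity
inside. As `t` is symmetric, doing this in each variable passes from the four corners of the box
`[g n, f n] × [g (n+1), f (n+1)]` to the point `(u n, u (n+1))` inside it.
-/

def turanForm (x y : ℝ) : ℝ := 4 * (1 - x) * (1 - y) - (1 - x * y) ^ 2

lemma turanForm_comm (x y : ℝ) : turanForm x y = turanForm y x := by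
  unfold turanForm; ring

-- Linear interpolation between `x₁` and `x₂` undershoots the concave quadratic `x ↦ turanForm x y`
-- by exactly `y ^ 2 * (x - x₁) * (x₂ - x)`.
lemma turanForm_interpolate_left (x₁ x₂ x y : ℝ) :
    (x₂ - x₁) * turanForm x y = (x₂ - x) * turanForm x₁ y + (x - x₁) * turanForm x₂ y
      + y ^ 2 * (x - x₁) * (x₂ - x) * (x₂ - x₁) := by
  unfold turanForm; ring

lemma turanForm_pos_of_mem_Ioo_left {x₁ x₂ x y : ℝ} (hx : x ∈ Set.Ioo x₁ x₂)
    (h₁ : 0 < turanForm x₁ y) (h₂ : 0 < turanForm x₂ y) : 0 < turanForm x y := by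
  obtain ⟨hx₁, hx₂⟩ := hx
  have hlt : 0 < x₂ - x₁ := by linarith
  have hl : 0 < x₂ - x := by linarith
  have hr : 0 < x - x₁ := by linarith
  have hprod : 0 < (x₂ - x₁) * turanForm x y := by
    rw [turanForm_interpolate_left x₁ x₂ x y]
    positivity
  exact pos_of_mul_pos_right hprod hlt.le

lemma turanForm_pos_of_mem_Ioo_right {x y₁ y₂ y : ℝ} (hy : y ∈ Set.Ioo y₁ y₂)
    (h₁ : 0 < turanForm x y₁) (h₂ : 0 < turanForm x y₂) : 0 < turanForm x y := by
  rw [turanForm_comm] at h₁ h₂ ⊢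
  exact turanForm_pos_of_mem_Ioo_left hy h₁ h₂

lemma turanForm_pos_of_corners {x₁ x₂ y₁ y₂ x y : ℝ} (hx : x ∈ Set.Ioo x₁ x₂)
    (hy : y ∈ Set.Ioo y₁ y₂) (h₁₁ : 0 < turanForm x₁ y₁) (h₁₂ : 0 < turanForm x₁ y₂)
    (h₂₁ : 0 < turanForm x₂ y₁) (h₂₂ : 0 < turanForm x₂ y₂) : 0 < turanForm x y :=
  turanForm_pos_of_mem_Ioo_right hy (turanForm_pos_of_mem_Ioo_left hx h₁₁ h₂₁)
    (turanForm_pos_of_mem_Ioo_left hx h₁₂ h₂₂)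

lemma higherTuran_eq_mul_turanForm {a b c d : ℝ} (hb : b ≠ 0) (hc : c ≠ 0) :
    4 * (b ^ 2 - a * c) * (c ^ 2 - b * d) - (b * c - a * d) ^ 2
      = b ^ 2 * c ^ 2 * turanForm (a * c / b ^ 2) (b * d / c ^ 2) := by
  unfold turanForm
  field_simp

theorem stmt3 (a u f g : ℕ → ℝ) (hpos : ∀ n, 0 < a n)
    (hu : ∀ n, 1 ≤ n → u n = a (n - 1) * a (n + 1) / (a n) ^ 2)
    (t : ℝ → ℝ → ℝ)
    (ht : ∀ x y, t x y = 4 * (1 - x) * (1 - y) - (1 - x * y) ^ 2)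
    (N : ℕ) (hN : 1 ≤ N)
    (hbound : ∀ n, N ≤ n → g n < u n ∧ u n < f n)
    (hcorners : ∀ n, N ≤ n → 0 < t (g n) (g (n + 1)) ∧ 0 < t (g n) (f (n + 1)) ∧
      0 < t (f n) (g (n + 1)) ∧ 0 < t (f n) (f (n + 1))) :
    ∀ n, N ≤ n →
      0 < 4 * ((a n) ^ 2 - a (n - 1) * a (n + 1)) * ((a (n + 1)) ^ 2 - a n * a (n + 2))
          - (a n * a (n + 1) - a (n - 1) * a (n + 2)) ^ 2 := by
  obtain rfl : t = turanForm := funext₂ ht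
  intro n hn
  obtain ⟨hgg, hgf, hfg, hff⟩ := hcorners n hn
  have hpos_u : 0 < turanForm (u n) (u (n + 1)) :=
    turanForm_pos_of_corners (hbound n hn) (hbound (n + 1) (by omega)) hgg hgf hfg hff
  rw [hu n (by omega), hu (n + 1) (by omega), Nat.add_sub_cancel] at hpos_u
  rw [higherTuran_eq_mul_turanForm (hpos n).ne' (hpos (n + 1)).ne']
  exact mul_pos (mul_pos (pow_pos (hpos n) 2) (pow_pos (hpos (n + 1)) 2)) hpos_u
end

section
/- Suppose M_n is a positive sequence satisfying 1 + 1/(2n^2) < M_{n+1}M_{n-1}/M_n^2 < 1 + 5/(2n^2) for all n ≥ 75. Then the sequence a_n = M_n/n! satisfies (n/(n+1))(1 + 1/(2n^2)) < a_{n+1}a_{n-1}/a_n^2 < (n/(n+1))(1 + 5/(2n^2)) for all n ≥ 75, and consequently a_n satisfies the higher order Turán inequality 4(a_n^2 - a_{n-1}a_{n+1})(a_{n+1}^2 - a_n a_{n+2}) - (a_n a_{n+1} - a_{n-1} a_{n+2})^2 > 0 for all n ≥ 75. -/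
theorem turanForm_one_sub (p q : ℝ) :
    turanForm (1 - p) (1 - q) = 2 * p * q * (p + q) - (p - q) ^ 2 - (p * q) ^ 2 := by
  unfold turanForm; ring

theorem higher_turan_eq_mul_turanForm (w x y z : ℝ) (hx : x ≠ 0) (hy : y ≠ 0) :
    4 * (x ^ 2 - w * y) * (y ^ 2 - x * z) - (x * y - w * z) ^ 2
      = x ^ 2 * y ^ 2 * turanForm (y * w / x ^ 2) (z * x / y ^ 2) := by
  unfold turanForm; field_simp

theorem turanForm_one_sub_pos {N p q : ℝ} (hN : 20 ≤ N)
    (hp : 1 < 2 * N * p) (hp' : N * p < 1) (hq : 1 < 2 * N * q) (hq' : N * q < 1)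
    (hpq : |p - q| * N ^ 2 < 3) : 0 < turanForm (1 - p) (1 - q) := by
  rw [turanForm_one_sub]
  have hN0 : 0 < N := by linarith
  have hNp : 0 < N * p := by linarith
  have hNq : 0 < N * q := by linarith
  have hdiff : (p - q) ^ 2 * N ^ 4 < 9 := by
    calc (p - q) ^ 2 * N ^ 4 = (|p - q| * N ^ 2) ^ 2 := by rw [mul_pow, sq_abs]; ring
      _ < 3 ^ 2 := pow_lt_pow_left₀ hpq (by positivity) two_ne_zero
      _ = 9 := by norm_num
  have hprod : (p * q) ^ 2 * N ^ 4 < 1 := by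
    have : N * p * (N * q) < 1 := by nlinarith
    nlinarith [mul_pos hNp hNq]
  have hmain : N / 2 < 2 * p * q * (p + q) * N ^ 4 := by
    have h4pq : 1 < 4 * (N * p) * (N * q) := by nlinarith
    have hsum : 1 < N * (p + q) := by linarith
    nlinarith [mul_pos (sub_pos.2 h4pq) (sub_pos.2 hsum)]
  nlinarith [pow_pos hN0 4]

theorem one_sub_bounds_of_ratio_bounds {m u : ℝ} (hm : 0 < m)
    (h1 : m / (m + 1) * (1 + 1 / (2 * m ^ 2)) < u) (h5 : u < m / (m + 1) * (1 + 5 / (2 * m ^ 2))) :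
    2 * m - 5 < 2 * m * (m + 1) * (1 - u) ∧ 2 * m * (m + 1) * (1 - u) < 2 * m - 1 := by
  have hscale : ∀ c : ℝ, m / (m + 1) * (1 + c / (2 * m ^ 2)) * (2 * m * (m + 1)) = 2 * m ^ 2 + c := by
    intro c; field_simp
  have hpos : 0 < 2 * m * (m + 1) := by positivity
  have l1 := mul_lt_mul_of_pos_right h1 hpos
  have l5 := mul_lt_mul_of_pos_right h5 hpos
  rw [hscale] at l1 l5
  constructor <;> linarith

theorem turanForm_pos_of_ratio_bounds {N u v : ℝ} (hN : 20 ≤ N)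
    (hu1 : N / (N + 1) * (1 + 1 / (2 * N ^ 2)) < u) (hu5 : u < N / (N + 1) * (1 + 5 / (2 * N ^ 2)))
    (hv1 : (N + 1) / (N + 1 + 1) * (1 + 1 / (2 * (N + 1) ^ 2)) < v)
    (hv5 : v < (N + 1) / (N + 1 + 1) * (1 + 5 / (2 * (N + 1) ^ 2))) :
    0 < turanForm u v := by
  obtain ⟨hp1, hp2⟩ := one_sub_bounds_of_ratio_bounds (by linarith) hu1 hu5
  obtain ⟨hq1, hq2⟩ := one_sub_bounds_of_ratio_bounds (by linarith) hv1 hv5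
  rw [← sub_sub_cancel 1 u, ← sub_sub_cancel 1 v]
  set p := 1 - u
  set q := 1 - v
  refine turanForm_one_sub_pos hN ?_ ?_ ?_ ?_ ?_
  · nlinarith
  · nlinarith
  · nlinarith
  · nlinarith
  · rw [← abs_of_nonneg (sq_nonneg N), ← abs_mul, abs_lt]
    constructor <;> nlinarith

theorem ratio_div_factorial {M a : ℕ → ℝ} (ha : ∀ n, a n = M n / n.factorial) {n : ℕ} (hn : n ≠ 0) :
    a (n + 1) * a (n - 1) / a n ^ 2 = n / (n + 1) * (M (n + 1) * M (n - 1) / M n ^ 2) := by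
  obtain ⟨k, rfl⟩ := Nat.exists_eq_succ_of_ne_zero hn
  rw [ha, ha, ha, Nat.succ_sub_one, Nat.factorial_succ (k + 1), Nat.factorial_succ k]
  have := (Nat.factorial_pos k).ne'
  push_cast
  field_simp

theorem stmt7 (M a : ℕ → ℝ) (hpos : ∀ n, 0 < M n)
    (hM : ∀ n : ℕ, 75 ≤ n →
      1 + 1 / (2 * (n : ℝ) ^ 2) < M (n + 1) * M (n - 1) / (M n) ^ 2 ∧
      M (n + 1) * M (n - 1) / (M n) ^ 2 < 1 + 5 / (2 * (n : ℝ) ^ 2))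
    (ha : ∀ n, a n = M n / (Nat.factorial n : ℝ)) :
    (∀ n : ℕ, 75 ≤ n →
      (n : ℝ) / (n + 1) * (1 + 1 / (2 * (n : ℝ) ^ 2)) < a (n + 1) * a (n - 1) / (a n) ^ 2 ∧
      a (n + 1) * a (n - 1) / (a n) ^ 2 < (n : ℝ) / (n + 1) * (1 + 5 / (2 * (n : ℝ) ^ 2))) ∧
    (∀ n : ℕ, 75 ≤ n →
      0 < 4 * ((a n) ^ 2 - a (n - 1) * a (n + 1)) * ((a (n + 1)) ^ 2 - a n * a (n + 2))
          - (a n * a (n + 1) - a (n - 1) * a (n + 2)) ^ 2) := by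
  have ratio_bounds : ∀ n : ℕ, 75 ≤ n →
      (n : ℝ) / (n + 1) * (1 + 1 / (2 * (n : ℝ) ^ 2)) < a (n + 1) * a (n - 1) / (a n) ^ 2 ∧
      a (n + 1) * a (n - 1) / (a n) ^ 2 < (n : ℝ) / (n + 1) * (1 + 5 / (2 * (n : ℝ) ^ 2)) := by
    intro n hn
    have hc : (0 : ℝ) < n / (n + 1) := by positivity
    rw [ratio_div_factorial ha (by omega)]
    exact ⟨mul_lt_mul_of_pos_left (hM n hn).1 hc, mul_lt_mul_of_pos_left (hM n hn).2 hc⟩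
  refine ⟨ratio_bounds, fun n hn => ?_⟩
  have ha_pos : ∀ k, 0 < a k := fun k => by rw [ha]; exact div_pos (hpos k) (by positivity)
  obtain ⟨hu1, hu5⟩ := ratio_bounds n hn
  obtain ⟨hv1, hv5⟩ := ratio_bounds (n + 1) (by omega)
  push_cast at hv1 hv5
  rw [higher_turan_eq_mul_turanForm _ _ _ _ (ha_pos n).ne' (ha_pos (n + 1)).ne']
  exact mul_pos (mul_pos (pow_pos (ha_pos n) 2) (pow_pos (ha_pos (n + 1)) 2))
    (turanForm_pos_of_ratio_bounds (by norm_cast; omega) hu1 hu5 hv1 hv5)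
end

section
/- With g_n = n/(n+1) and f_n = (n/(n+1))(1 + 2/n^2), and t(x,y) = 4(1-x)(1-y)-(1-xy)^2, the following identities and inequalities hold: t(g_n,g_{n+1}) = 4/((n+1)(n+2)^2) > 0 for n ≥ 1; t(g_n,f_{n+1}) = (4n^3 - 8n^2 - 20n - 12)/((n+1)^4(n+2)^2) > 0 for n > 3; t(f_n,g_{n+1}) = (4n^2 - 12n - 4)/(n^2(n+1)(n+2)^2) > 0 for n > 3; t(f_n,f_{n+1}) = (4n^5 - 12n^4 + 4n^3 + 12n^2 - 8n - 36)/(n^2(n+1)^4(n+2)^2) > 0 for n > 2. -/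
namespace FranelTuran

def t (x y : ℝ) : ℝ := 4 * (1 - x) * (1 - y) - (1 - x * y) ^ 2

noncomputable def g (x : ℝ) : ℝ := x / (x + 1)

noncomputable def f (x : ℝ) : ℝ := x / (x + 1) * (1 + 2 / x ^ 2)

variable {x : ℝ}

theorem t_g_g (h₁ : x + 1 ≠ 0) (h₂ : x + 2 ≠ 0) :
    t (g x) (g (x + 1)) = 4 / ((x + 1) * (x + 2) ^ 2) := by
  have h₂' : x + 1 + 1 ≠ 0 := by rwa [add_assoc, one_add_one_eq_two]
  unfold t g
  field_simp
  ring

theorem t_g_f (h₁ : x + 1 ≠ 0) (h₂ : x + 2 ≠ 0) :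
    t (g x) (f (x + 1)) =
      (4 * x ^ 3 - 8 * x ^ 2 - 20 * x - 12) / ((x + 1) ^ 4 * (x + 2) ^ 2) := by
  have h₂' : x + 1 + 1 ≠ 0 := by rwa [add_assoc, one_add_one_eq_two]
  unfold t g f
  field_simp
  ring

theorem t_f_g (h₀ : x ≠ 0) (h₁ : x + 1 ≠ 0) (h₂ : x + 2 ≠ 0) :
    t (f x) (g (x + 1)) = (4 * x ^ 2 - 12 * x - 4) / (x ^ 2 * (x + 1) * (x + 2) ^ 2) := by
  have h₂' : x + 1 + 1 ≠ 0 := by rwa [add_assoc, one_add_one_eq_two]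
  unfold t g f
  field_simp
  ring

theorem t_f_f (h₀ : x ≠ 0) (h₁ : x + 1 ≠ 0) (h₂ : x + 2 ≠ 0) :
    t (f x) (f (x + 1)) =
      (4 * x ^ 5 - 12 * x ^ 4 + 4 * x ^ 3 + 12 * x ^ 2 - 8 * x - 36) /
        (x ^ 2 * (x + 1) ^ 4 * (x + 2) ^ 2) := by
  have h₂' : x + 1 + 1 ≠ 0 := by rwa [add_assoc, one_add_one_eq_two]
  unfold t f
  field_simp
  ring

theorem t_g_g_pos (hx : -1 < x) : 0 < t (g x) (g (x + 1)) := by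
  rw [t_g_g (by linarith) (by linarith)]
  exact div_pos four_pos (mul_pos (by linarith) (pow_pos (by linarith) 2))

theorem t_g_f_pos (hx : 4 ≤ x) : 0 < t (g x) (f (x + 1)) := by
  rw [t_g_f (by linarith) (by linarith)]
  exact div_pos (by nlinarith) (by positivity)

theorem t_f_g_pos (hx : 4 ≤ x) : 0 < t (f x) (g (x + 1)) := by
  rw [t_f_g (by linarith) (by linarith) (by linarith)]
  exact div_pos (by nlinarith) (by positivity)

theorem t_f_f_pos (hx : 3 ≤ x) : 0 < t (f x) (f (x + 1)) := by
  rw [t_f_f (by linarith) (by linarith) (by linarith)]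
  have h₄ : 0 ≤ x ^ 4 * (x - 3) := mul_nonneg (by positivity) (by linarith)
  exact div_pos (by nlinarith) (by positivity)

end FranelTuran

theorem stmt8 (t : ℝ → ℝ → ℝ)
    (ht : ∀ x y, t x y = 4 * (1 - x) * (1 - y) - (1 - x * y) ^ 2)
    (g f : ℕ → ℝ)
    (hg : ∀ n : ℕ, 1 ≤ n → g n = (n : ℝ) / (n + 1))
    (hf : ∀ n : ℕ, 1 ≤ n → f n = (n : ℝ) / (n + 1) * (1 + 2 / (n : ℝ) ^ 2)) :
    (∀ n : ℕ, 1 ≤ n →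
      t (g n) (g (n + 1)) = 4 / (((n : ℝ) + 1) * ((n : ℝ) + 2) ^ 2) ∧
      0 < t (g n) (g (n + 1))) ∧
    (∀ n : ℕ, 3 < n →
      t (g n) (f (n + 1)) = (4 * (n : ℝ) ^ 3 - 8 * (n : ℝ) ^ 2 - 20 * (n : ℝ) - 12) /
        (((n : ℝ) + 1) ^ 4 * ((n : ℝ) + 2) ^ 2) ∧
      0 < t (g n) (f (n + 1))) ∧
    (∀ n : ℕ, 3 < n →
      t (f n) (g (n + 1)) = (4 * (n : ℝ) ^ 2 - 12 * (n : ℝ) - 4) /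
        ((n : ℝ) ^ 2 * ((n : ℝ) + 1) * ((n : ℝ) + 2) ^ 2) ∧
      0 < t (f n) (g (n + 1))) ∧
    (∀ n : ℕ, 2 < n →
      t (f n) (f (n + 1)) = (4 * (n : ℝ) ^ 5 - 12 * (n : ℝ) ^ 4 + 4 * (n : ℝ) ^ 3
          + 12 * (n : ℝ) ^ 2 - 8 * (n : ℝ) - 36) /
        ((n : ℝ) ^ 2 * ((n : ℝ) + 1) ^ 4 * ((n : ℝ) + 2) ^ 2) ∧
      0 < t (f n) (f (n + 1))) := by
  have ht' : t = FranelTuran.t := funext₂ ht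
  have hg_succ (n : ℕ) : g (n + 1) = FranelTuran.g (n + 1) := by
    rw [hg _ (by omega)]; push_cast; rfl
  have hf_succ (n : ℕ) : f (n + 1) = FranelTuran.f (n + 1) := by
    rw [hf _ (by omega)]; push_cast; rfl
  refine ⟨fun n hn => ?_, fun n hn => ?_, fun n hn => ?_, fun n hn => ?_⟩
  · have hx : (1 : ℝ) ≤ n := by exact_mod_cast hn
    rw [ht', hg n hn, hg_succ]
    exact ⟨FranelTuran.t_g_g (by linarith) (by linarith), FranelTuran.t_g_g_pos (by linarith)⟩
  · have hx : (4 : ℝ) ≤ n := by exact_mod_cast hn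
    rw [ht', hg n (by omega), hf_succ]
    exact ⟨FranelTuran.t_g_f (by linarith) (by linarith), FranelTuran.t_g_f_pos hx⟩
  · have hx : (4 : ℝ) ≤ n := by exact_mod_cast hn
    rw [ht', hf n (by omega), hg_succ]
    exact ⟨FranelTuran.t_f_g (by linarith) (by linarith) (by linarith), FranelTuran.t_f_g_pos hx⟩
  · have hx : (3 : ℝ) ≤ n := by exact_mod_cast hn
    rw [ht', hf n (by omega), hf_succ]
    exact ⟨FranelTuran.t_f_f (by linarith) (by linarith) (by linarith), FranelTuran.t_f_f_pos hx⟩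
end

section
/- Suppose b_n is a positive sequence satisfying 1 < b_{n+1}b_{n-1}/b_n^2 < 1 + 3/n^2 for all n ≥ 16. Then a_n = b_n/n! satisfies n/(n+1) < a_{n+1}a_{n-1}/a_n^2 < (n/(n+1))(1 + 3/n^2) for all n ≥ 16, and with g_n = n/(n+1), f_n = (n/(n+1))(1+3/n^2), the quantities t(g_n,g_{n+1}) = 4/((n+1)(n+2)^2), t(g_n,f_{n+1}) = (4n^3-21n^2-36n-20)/((n+1)^4(n+2)^2), t(f_n,g_{n+1}) = (4n^2-21n-9)/(n^2(n+1)(n+2)^2), t(f_n,f_{n+1}) = (4n^5-24n^4+36n^3+16n^2-48n-144)/(n^2(n+1)^4(n+2)^2) are all positive for n ≥ 8; hence a_n satisfies the higher order Turán inequality for all n ≥ 16. -/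
/-!
Write `u n = a (n+1) a (n-1) / (a n)^2`. Dividing by `n!` multiplies the corresponding ratio of `b`
by `n / (n+1)`, so the hypothesis on `b` places `u n` strictly between `g n` and `f n`. The Turán
expression at `n` equals `(a n)^2 (a (n+1))^2 t(u n, u (n+1))`, and `t` is concave in each variable
separately, so its positivity at the four corners of the box `[g n, f n] × [g (n+1), f (n+1)]`
propagates to the whole box.
-/

open Nat

noncomputable section

def turanPoly (x y : ℝ) : ℝ := 4 * (1 - x) * (1 - y) - (1 - x * y) ^ 2

theorem turanPoly_comm (x y : ℝ) : turanPoly x y = turanPoly y x := by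
  unfold turanPoly; ring

/-- `turanPoly · y` is a quadratic with leading coefficient `-y^2`, hence lies above its chords. -/
theorem turanPoly_pos_of_mem_Icc_left {G F x : ℝ} (y : ℝ) (hGx : G ≤ x) (hxF : x ≤ F)
    (hG : 0 < turanPoly G y) (hF : 0 < turanPoly F y) : 0 < turanPoly x y := by
  rcases hGx.eq_or_lt with rfl | hGx'
  · exact hG
  have chord : (F - G) * turanPoly x y = (F - x) * turanPoly G y + (x - G) * turanPoly F y
      + y ^ 2 * (x - G) * (F - x) * (F - G) := by
    unfold turanPoly; ring
  have hFG : 0 < F - G := by linarith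
  refine pos_of_mul_pos_right (chord ▸ ?_) hFG.le
  have : 0 ≤ y ^ 2 * (x - G) * (F - x) * (F - G) := by
    have := sub_nonneg.2 hxF; have := sub_nonneg.2 hGx; positivity
  nlinarith [mul_nonneg (sub_nonneg.2 hxF) hG.le, mul_pos (sub_pos.2 hGx') hF]

theorem turanPoly_pos_of_corners {G F G' F' x y : ℝ}
    (hx : x ∈ Set.Icc G F) (hy : y ∈ Set.Icc G' F')
    (hGG : 0 < turanPoly G G') (hGF : 0 < turanPoly G F')
    (hFG : 0 < turanPoly F G') (hFF : 0 < turanPoly F F') : 0 < turanPoly x y := by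
  have edge : ∀ z, 0 < turanPoly z G' → 0 < turanPoly z F' → 0 < turanPoly z y := by
    intro z h₁ h₂
    rw [turanPoly_comm] at h₁ h₂ ⊢
    exact turanPoly_pos_of_mem_Icc_left z hy.1 hy.2 h₁ h₂
  exact turanPoly_pos_of_mem_Icc_left y hx.1 hx.2 (edge G hGG hGF) (edge F hFG hFF)

def turanRatio (u : ℕ → ℝ) (n : ℕ) : ℝ := u (n + 1) * u (n - 1) / u n ^ 2

theorem turanRatio_div_factorial (b : ℕ → ℝ) {n : ℕ} (hn : 1 ≤ n) :
    turanRatio (fun k => b k / k !) n = turanRatio b n * (n / (n + 1)) := by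
  obtain ⟨m, rfl⟩ : ∃ m, n = m + 1 := ⟨n - 1, by omega⟩
  simp only [turanRatio, Nat.add_sub_cancel, factorial_succ, cast_mul, cast_add, cast_one]
  have : (0 : ℝ) < m ! := by exact_mod_cast factorial_pos m
  field_simp

theorem turan_expr_eq_mul_turanPoly (a : ℕ → ℝ) {n : ℕ} (hn : 1 ≤ n)
    (h₀ : a n ≠ 0) (h₁ : a (n + 1) ≠ 0) :
    4 * (a n ^ 2 - a (n - 1) * a (n + 1)) * (a (n + 1) ^ 2 - a n * a (n + 2))
        - (a n * a (n + 1) - a (n - 1) * a (n + 2)) ^ 2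
      = a n ^ 2 * a (n + 1) ^ 2 * turanPoly (turanRatio a n) (turanRatio a (n + 1)) := by
  obtain ⟨m, rfl⟩ : ∃ m, n = m + 1 := ⟨n - 1, by omega⟩
  simp only [turanPoly, turanRatio, Nat.add_sub_cancel]
  field_simp

def ratioLower (x : ℝ) : ℝ := x / (x + 1)

def ratioUpper (x : ℝ) : ℝ := x / (x + 1) * (1 + 3 / x ^ 2)

section Corners

variable {x : ℝ}

theorem turanPoly_lower_lower (hx : 0 < x) :
    turanPoly (ratioLower x) (ratioLower (x + 1)) = 4 / ((x + 1) * (x + 2) ^ 2) := by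
  unfold turanPoly ratioLower
  field_simp
  ring

theorem turanPoly_lower_upper (hx : 0 < x) :
    turanPoly (ratioLower x) (ratioUpper (x + 1))
      = (4 * x ^ 3 - 21 * x ^ 2 - 36 * x - 20) / ((x + 1) ^ 4 * (x + 2) ^ 2) := by
  unfold turanPoly ratioLower ratioUpper
  field_simp
  ring

theorem turanPoly_upper_lower (hx : 0 < x) :
    turanPoly (ratioUpper x) (ratioLower (x + 1))
      = (4 * x ^ 2 - 21 * x - 9) / (x ^ 2 * (x + 1) * (x + 2) ^ 2) := by
  unfold turanPoly ratioLower ratioUpper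
  field_simp
  ring

theorem turanPoly_upper_upper (hx : 0 < x) :
    turanPoly (ratioUpper x) (ratioUpper (x + 1))
      = (4 * x ^ 5 - 24 * x ^ 4 + 36 * x ^ 3 + 16 * x ^ 2 - 48 * x - 144)
        / (x ^ 2 * (x + 1) ^ 4 * (x + 2) ^ 2) := by
  unfold turanPoly ratioUpper
  field_simp
  ring

theorem turanPoly_lower_lower_pos (hx : 0 < x) :
    0 < turanPoly (ratioLower x) (ratioLower (x + 1)) := by
  rw [turanPoly_lower_lower hx]
  positivity

theorem turanPoly_lower_upper_pos (hx : 8 ≤ x) :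
    0 < turanPoly (ratioLower x) (ratioUpper (x + 1)) := by
  rw [turanPoly_lower_upper (by linarith)]
  have h : 0 ≤ x - 8 := by linarith
  exact div_pos (by nlinarith [pow_nonneg h 3, pow_nonneg h 2]) (by positivity)

theorem turanPoly_upper_lower_pos (hx : 8 ≤ x) :
    0 < turanPoly (ratioUpper x) (ratioLower (x + 1)) := by
  rw [turanPoly_upper_lower (by linarith)]
  have h : 0 ≤ x - 8 := by linarith
  exact div_pos (by nlinarith [pow_nonneg h 2]) (by positivity)

theorem turanPoly_upper_upper_pos (hx : 8 ≤ x) :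
    0 < turanPoly (ratioUpper x) (ratioUpper (x + 1)) := by
  rw [turanPoly_upper_upper (by linarith)]
  have h : 0 ≤ x - 8 := by linarith
  exact div_pos (by nlinarith [pow_nonneg h 5, pow_nonneg h 4, pow_nonneg h 3, pow_nonneg h 2])
    (by positivity)

end Corners

theorem turanRatio_div_factorial_mem_Ioo (b : ℕ → ℝ) {n : ℕ} (hn : 1 ≤ n)
    (hb : 1 < turanRatio b n ∧ turanRatio b n < 1 + 3 / (n : ℝ) ^ 2) :
    turanRatio (fun k => b k / k !) n ∈ Set.Ioo (ratioLower n) (ratioUpper n) := by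
  rw [turanRatio_div_factorial b hn, ratioLower, ratioUpper]
  have hq : (0 : ℝ) < n / (n + 1) := by positivity
  constructor <;> nlinarith

end

theorem stmt9 (b a g f : ℕ → ℝ) (hpos : ∀ n, 0 < b n)
    (hb : ∀ n : ℕ, 16 ≤ n →
      1 < b (n + 1) * b (n - 1) / (b n) ^ 2 ∧
      b (n + 1) * b (n - 1) / (b n) ^ 2 < 1 + 3 / (n : ℝ) ^ 2)
    (ha : ∀ n, a n = b n / (Nat.factorial n : ℝ))
    (hg : ∀ n : ℕ, 1 ≤ n → g n = (n : ℝ) / (n + 1))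
    (hf : ∀ n : ℕ, 1 ≤ n → f n = (n : ℝ) / (n + 1) * (1 + 3 / (n : ℝ) ^ 2))
    (t : ℝ → ℝ → ℝ)
    (ht : ∀ x y, t x y = 4 * (1 - x) * (1 - y) - (1 - x * y) ^ 2) :
    (∀ n : ℕ, 16 ≤ n →
      (n : ℝ) / (n + 1) < a (n + 1) * a (n - 1) / (a n) ^ 2 ∧
      a (n + 1) * a (n - 1) / (a n) ^ 2 < (n : ℝ) / (n + 1) * (1 + 3 / (n : ℝ) ^ 2)) ∧
    (∀ n : ℕ, 8 ≤ n →
      t (g n) (g (n + 1)) = 4 / (((n : ℝ) + 1) * ((n : ℝ) + 2) ^ 2) ∧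
      t (g n) (f (n + 1)) = (4 * (n : ℝ) ^ 3 - 21 * (n : ℝ) ^ 2 - 36 * (n : ℝ) - 20) /
        (((n : ℝ) + 1) ^ 4 * ((n : ℝ) + 2) ^ 2) ∧
      t (f n) (g (n + 1)) = (4 * (n : ℝ) ^ 2 - 21 * (n : ℝ) - 9) /
        ((n : ℝ) ^ 2 * ((n : ℝ) + 1) * ((n : ℝ) + 2) ^ 2) ∧
      t (f n) (f (n + 1)) = (4 * (n : ℝ) ^ 5 - 24 * (n : ℝ) ^ 4 + 36 * (n : ℝ) ^ 3
          + 16 * (n : ℝ) ^ 2 - 48 * (n : ℝ) - 144) /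
        ((n : ℝ) ^ 2 * ((n : ℝ) + 1) ^ 4 * ((n : ℝ) + 2) ^ 2) ∧
      0 < t (g n) (g (n + 1)) ∧ 0 < t (g n) (f (n + 1)) ∧
      0 < t (f n) (g (n + 1)) ∧ 0 < t (f n) (f (n + 1))) ∧
    (∀ n : ℕ, 16 ≤ n →
      0 < 4 * ((a n) ^ 2 - a (n - 1) * a (n + 1)) * ((a (n + 1)) ^ 2 - a n * a (n + 2))
          - (a n * a (n + 1) - a (n - 1) * a (n + 2)) ^ 2) := by
  obtain rfl : t = turanPoly := funext fun x => funext (ht x)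
  have ratio_mem :
      ∀ n : ℕ, 16 ≤ n → turanRatio a n ∈ Set.Ioo (ratioLower n) (ratioUpper n) :=
    fun n hn => funext ha ▸ turanRatio_div_factorial_mem_Ioo b (by omega) (hb n hn)
  have corners : ∀ n : ℕ, 8 ≤ n →
      g n = ratioLower n ∧ g (n + 1) = ratioLower ((n : ℝ) + 1) ∧
      f n = ratioUpper n ∧ f (n + 1) = ratioUpper ((n : ℝ) + 1) := fun n hn =>
    ⟨hg n (by omega), by rw [hg (n + 1) (by omega), cast_succ]; rfl,
      hf n (by omega), by rw [hf (n + 1) (by omega), cast_succ]; rfl⟩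
  refine ⟨ratio_mem, fun n hn => ?_, fun n hn => ?_⟩
  · have hx : (8 : ℝ) ≤ n := by exact_mod_cast hn
    obtain ⟨hg₀, hg₁, hf₀, hf₁⟩ := corners n hn
    rw [hg₀, hg₁, hf₀, hf₁]
    exact ⟨turanPoly_lower_lower (by linarith), turanPoly_lower_upper (by linarith),
      turanPoly_upper_lower (by linarith), turanPoly_upper_upper (by linarith),
      turanPoly_lower_lower_pos (by linarith), turanPoly_lower_upper_pos hx,
      turanPoly_upper_lower_pos hx, turanPoly_upper_upper_pos hx⟩
  · have hx : (8 : ℝ) ≤ n := by exact_mod_cast (by omega : 8 ≤ n)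
    have hA : ∀ k, 0 < a k :=
      fun k => ha k ▸ div_pos (hpos k) (by exact_mod_cast factorial_pos k)
    have hu₀ := ratio_mem n hn
    have hu₁ := ratio_mem (n + 1) (by omega)
    rw [cast_succ] at hu₁
    rw [turan_expr_eq_mul_turanPoly _ (by omega) (hA n).ne' (hA (n + 1)).ne']
    exact mul_pos (mul_pos (pow_pos (hA n) 2) (pow_pos (hA (n + 1)) 2)) <|
      turanPoly_pos_of_corners (Set.Ioo_subset_Icc_self hu₀) (Set.Ioo_subset_Icc_self hu₁)
        (turanPoly_lower_lower_pos (by linarith)) (turanPoly_lower_upper_pos hx)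
        (turanPoly_upper_lower_pos hx) (turanPoly_upper_upper_pos hx)
end

section
/- Let r : ℝ → ℝ be a polynomial (or rational function defined for large x). Then for every positive integer K there exist rational functions r_1, ..., r_K such that r(log(n+1)) - r(log n) = Σ_{i=1}^K r_i(log n)/n^i + o(1/n^K) as n → ∞, with r_1(x) = r'(x) and r_2(x) = (r''(x) - r'(x))/2. -/
/-!
Write `log (n + 1) = x + δ` with `x = log n` and `δ = log (1 + 1/n)`. Taylor's formula for the
polynomial `r` is exact: `r (x + δ) = ∑ⱼ (hasseDeriv j r) x · δʲ`. Up to `O(n^{-(K+1)})` each `δʲ`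
is a polynomial in `1/n` (a power of a Taylor polynomial of `log (1 + y)`, truncated at degree
`K`), and the coefficients `(hasseDeriv j r) (log n)` are `o(n)`, so each error term is
`o(n^{-K})`. Collecting the powers of `1/n` gives the polynomials `rᵢ`.
-/

open Real Filter Asymptotics Polynomial Topology

lemma coeff_pow_eq_zero_of_lt {R : Type*} [CommSemiring R] {p : R[X]} (hp : p.coeff 0 = 0)
    {i j : ℕ} (hij : i < j) : (p ^ j).coeff i = 0 :=
  X_pow_dvd_iff.1 (pow_dvd_pow_of_dvd (X_dvd_iff.2 hp) j) i hij

lemma Finset.sum_range_succ_eq_add_sum_Icc {M : Type*} [AddCommMonoid M] (f : ℕ → M) (K : ℕ) :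
    ∑ i ∈ Finset.range (K + 1), f i = f 0 + ∑ i ∈ Finset.Icc 1 K, f i := by
  rw [Finset.range_eq_Ico, Finset.sum_eq_sum_Ico_succ_bot (by omega : 0 < K + 1), zero_add,
    Finset.Ico_add_one_right_eq_Icc]

lemma isBigO_pow_sub_pow {α 𝕜 : Type*} [NormedField 𝕜] {l : Filter α} {f g : α → 𝕜}
    {h : α → ℝ} (hfg : (fun x => f x - g x) =O[l] h) (hf : f =O[l] fun _ => (1 : ℝ))
    (hg : g =O[l] fun _ => (1 : ℝ)) (j : ℕ) : (fun x => f x ^ j - g x ^ j) =O[l] h := by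
  have hbdd : (fun x => ∑ t ∈ Finset.range j, f x ^ t * g x ^ (j - 1 - t))
      =O[l] fun _ => (1 : ℝ) :=
    IsBigO.fun_sum fun t _ => by simpa using (hf.pow t).mul (hg.pow (j - 1 - t))
  simpa [geom_sum₂_mul] using hbdd.mul hfg

lemma isBigO_eval_sub_sum_range_coeff {𝕜 : Type*} [NormedField 𝕜] (p : 𝕜[X]) (K : ℕ) :
    (fun y => p.eval y - ∑ i ∈ Finset.range (K + 1), p.coeff i * y ^ i)
      =O[𝓝 0] fun y => y ^ (K + 1) := by
  obtain ⟨q, hq⟩ : X ^ (K + 1) ∣ p - ∑ i ∈ Finset.range (K + 1), C (p.coeff i) * X ^ i := by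
    refine X_pow_dvd_iff.2 fun d hd => ?_
    simp [finsetSum_coeff, Finset.mem_range.2 hd]
  have heval (y : 𝕜) : p.eval y - ∑ i ∈ Finset.range (K + 1), p.coeff i * y ^ i
      = y ^ (K + 1) * q.eval y := by
    simpa [eval_finsetSum] using congrArg (eval y) hq
  simp only [heval]
  simpa using (isBigO_refl (fun y : 𝕜 => y ^ (K + 1)) (𝓝 0)).mul
    ((q.continuous.tendsto 0).isBigO_one 𝕜)

noncomputable def logTaylor (M : ℕ) : ℝ[X] :=
  ∑ k ∈ Finset.range M, C ((-1 : ℝ) ^ k / (k + 1)) * X ^ (k + 1)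

lemma coeff_logTaylor_zero (M : ℕ) : (logTaylor M).coeff 0 = 0 := by
  simp [logTaylor, finsetSum_coeff]

lemma coeff_logTaylor_succ (M i : ℕ) :
    (logTaylor M).coeff (i + 1) = if i < M then (-1 : ℝ) ^ i / (i + 1) else 0 := by
  simp [logTaylor, finsetSum_coeff]

lemma coeff_logTaylor_one {M : ℕ} (hM : 1 ≤ M) : (logTaylor M).coeff 1 = 1 := by
  simpa [(by omega : 0 < M)] using coeff_logTaylor_succ M 0

lemma coeff_logTaylor_two {M : ℕ} (hM : 2 ≤ M) : (logTaylor M).coeff 2 = -(1 / 2) := by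
  have h := coeff_logTaylor_succ M 1
  norm_num [(by omega : 1 < M)] at h
  exact h

lemma eval_logTaylor (M : ℕ) (y : ℝ) :
    (logTaylor M).eval y = ∑ k ∈ Finset.range M, (-1 : ℝ) ^ k / (k + 1) * y ^ (k + 1) := by
  simp [logTaylor, eval_finsetSum]

lemma isBigO_log_one_add_sub_logTaylor (M : ℕ) :
    (fun y => log (1 + y) - (logTaylor M).eval y) =O[𝓝 0] fun y => y ^ (M + 1) := by
  refine isBigO_iff.2 ⟨2, ?_⟩
  filter_upwards [Metric.ball_mem_nhds (0 : ℝ) one_half_pos] with y hy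
  rw [Metric.mem_ball, dist_zero_right, norm_eq_abs] at hy
  have key := abs_log_sub_add_sum_range_le (x := -y) (by rw [abs_neg]; linarith) M
  have hsum : ∑ i ∈ Finset.range M, (-y) ^ (i + 1) / (i + 1) = -(logTaylor M).eval y := by
    rw [eval_logTaylor, ← Finset.sum_neg_distrib]
    refine Finset.sum_congr rfl fun i _ => ?_
    rw [neg_pow, pow_succ]
    ring
  rw [hsum, abs_neg, sub_neg_eq_add, neg_add_eq_sub] at key
  rw [norm_eq_abs, norm_eq_abs, abs_pow]
  calc _ ≤ |y| ^ (M + 1) / (1 - |y|) := key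
    _ ≤ 2 * |y| ^ (M + 1) := by
      rw [div_le_iff₀ (by linarith)]
      nlinarith [pow_nonneg (abs_nonneg y) (M + 1)]

lemma isBigO_log_one_add_pow_sub_sum_coeff {K M : ℕ} (hKM : K < M) (j : ℕ) :
    (fun y => log (1 + y) ^ j
        - ∑ i ∈ Finset.range (K + 1), ((logTaylor M) ^ j).coeff i * y ^ i)
      =O[𝓝 0] fun y => y ^ (K + 1) := by
  have hlog : Tendsto (fun y => log (1 + y)) (𝓝 0) (𝓝 0) := by
    simpa using ((continuous_const_add (1 : ℝ)).tendsto 0).log (by norm_num)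
  have hpow : (fun y => log (1 + y) ^ j - (logTaylor M).eval y ^ j)
      =O[𝓝 0] fun y => y ^ (K + 1) :=
    isBigO_pow_sub_pow ((isBigO_log_one_add_sub_logTaylor M).trans
        (isLittleO_pow_pow (by omega)).isBigO)
      (hlog.isBigO_one ℝ) (((logTaylor M).continuous.tendsto 0).isBigO_one ℝ) j
  simpa [eval_pow] using hpow.add (isBigO_eval_sub_sum_range_coeff ((logTaylor M) ^ j) K)

lemma isLittleO_eval_log_natCast (p : ℝ[X]) :
    (fun n : ℕ => p.eval (log n)) =o[atTop] fun n : ℕ => (n : ℝ) := by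
  have hdeg : (fun x => p.eval (log x)) =O[atTop] fun x => log x ^ p.natDegree := by
    simpa [Function.comp_def] using (isBigO_atTop_of_degree_le p (X ^ p.natDegree)
      (by rw [degree_X_pow]; exact degree_le_natDegree)).comp_tendsto tendsto_log_atTop
  exact (hdeg.trans_isLittleO isLittleO_pow_log_id_atTop).comp_tendsto
    tendsto_natCast_atTop_atTop

lemma isLittleO_eval_log_mul_of_isBigO (p : ℝ[X]) {K : ℕ} {f : ℕ → ℝ}
    (hf : f =O[atTop] fun n : ℕ => (1 / (n : ℝ)) ^ (K + 1)) :
    (fun n : ℕ => p.eval (log n) * f n) =o[atTop] fun n : ℕ => 1 / (n : ℝ) ^ K := by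
  refine ((isLittleO_eval_log_natCast p).mul_isBigO hf).congr' EventuallyEq.rfl ?_
  filter_upwards [eventually_ne_atTop 0] with n hn
  rw [one_div_pow, pow_succ]
  field_simp

lemma log_natCast_add_one {n : ℕ} (hn : n ≠ 0) :
    log ((n : ℝ) + 1) = log n + log (1 + 1 / n) := by
  rw [← log_mul (by positivity) (by positivity)]
  field_simp

/-- The coefficient of `yⁱ` in `r (x + logTaylor M y)`, expanded by Taylor's formula at `x`;
it does not depend on `M` as long as `i ≤ M`. -/
noncomputable def expansionCoeff (r : ℝ[X]) (M i : ℕ) : ℝ[X] :=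
  ∑ j ∈ Finset.range (r.natDegree + 1), C (((logTaylor M) ^ j).coeff i) * hasseDeriv j r

lemma eval_add_sub_sum_expansionCoeff (r : ℝ[X]) (M K : ℕ) (x δ y : ℝ) :
    r.eval (x + δ) - ∑ i ∈ Finset.range (K + 1), (expansionCoeff r M i).eval x * y ^ i
      = ∑ j ∈ Finset.range (r.natDegree + 1), (hasseDeriv j r).eval x *
          (δ ^ j - ∑ i ∈ Finset.range (K + 1), ((logTaylor M) ^ j).coeff i * y ^ i) := by
  have htaylor : r.eval (x + δ)
      = ∑ j ∈ Finset.range (r.natDegree + 1), (hasseDeriv j r).eval x * δ ^ j := by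
    rw [add_comm, ← taylor_eval,
      eval_eq_sum_range' (n := r.natDegree + 1) (by rw [natDegree_taylor]; omega)]
    simp only [taylor_coeff]
  simp only [htaylor, expansionCoeff, eval_finsetSum, eval_mul, eval_C, mul_sub, Finset.mul_sum,
    Finset.sum_sub_distrib, Finset.sum_mul]
  rw [Finset.sum_comm]
  congr 1
  refine Finset.sum_congr rfl fun j _ => Finset.sum_congr rfl fun i _ => ?_
  ring

lemma expansionCoeff_zero (r : ℝ[X]) (M : ℕ) : expansionCoeff r M 0 = r := by
  rw [expansionCoeff, Finset.sum_eq_single 0]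
  · simp
  · intro j _ hj
    rw [coeff_pow_eq_zero_of_lt (coeff_logTaylor_zero M) (Nat.pos_of_ne_zero hj), C_0, zero_mul]
  · simp

lemma expansionCoeff_one (r : ℝ[X]) {M : ℕ} (hM : 1 ≤ M) :
    expansionCoeff r M 1 = derivative r := by
  rw [expansionCoeff, Finset.sum_eq_single 1]
  · rw [pow_one, coeff_logTaylor_one hM, C_1, one_mul, hasseDeriv_one]
  · intro j _ hj
    rcases Nat.lt_or_gt_of_ne hj with hj | hj
    · simp [Nat.lt_one_iff.1 hj, coeff_one]
    · rw [coeff_pow_eq_zero_of_lt (coeff_logTaylor_zero M) hj, C_0, zero_mul]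
  · intro h
    rw [hasseDeriv_eq_zero_of_lt_natDegree _ _ (by simpa using h), mul_zero]

lemma hasseDeriv_two (r : ℝ[X]) :
    hasseDeriv 2 r = C (1 / 2 : ℝ) * derivative (derivative r) := by
  have h := congrFun (factorial_smul_hasseDeriv (R := ℝ) (k := 2)) r
  simp only [Nat.factorial_two, LinearMap.smul_apply, Function.iterate_succ,
    Function.iterate_zero, Function.comp_apply, id] at h
  rw [← h, nsmul_eq_mul, ← mul_assoc, ← map_natCast C, ← C_mul]
  norm_num

lemma expansionCoeff_two (r : ℝ[X]) {M : ℕ} (hM : 2 ≤ M) :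
    expansionCoeff r M 2 = C (1 / 2 : ℝ) * (derivative (derivative r) - derivative r) := by
  have hL0 := coeff_logTaylor_zero M
  have hL1 := coeff_logTaylor_one (by omega : 1 ≤ M)
  have hL2 := coeff_logTaylor_two hM
  have hL2sq : ((logTaylor M) ^ 2).coeff 2 = 1 := by
    simp [sq, coeff_mul, Finset.Nat.antidiagonal_succ, hL0, hL1]
  rw [expansionCoeff, Finset.sum_eq_add 1 2 (by norm_num)]
  · rw [pow_one, hL2, hL2sq, hasseDeriv_one, hasseDeriv_two, C_neg, C_1]
    ring
  · intro j _ ⟨hj1, _⟩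
    rcases Nat.lt_or_gt_of_ne hj1 with hj | hj
    · simp [Nat.lt_one_iff.1 hj, coeff_one]
    · rw [coeff_pow_eq_zero_of_lt hL0 (by omega : 2 < j), C_0, zero_mul]
  all_goals
    intro h
    rw [hasseDeriv_eq_zero_of_lt_natDegree _ _ (by simpa using h), mul_zero]

theorem stmt11_general (r : Polynomial ℝ) (K : ℕ) :
    ∃ rs : ℕ → Polynomial ℝ,
      rs 1 = derivative r ∧
      rs 2 = Polynomial.C (1 / 2 : ℝ) * (derivative (derivative r) - derivative r) ∧
      (fun n : ℕ => r.eval (Real.log (n + 1)) - r.eval (Real.log n)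
          - ∑ i ∈ Finset.Icc 1 K, (rs i).eval (Real.log n) / (n : ℝ) ^ i)
        =o[atTop] fun n : ℕ => 1 / (n : ℝ) ^ K := by
  refine ⟨expansionCoeff r (K + 2), expansionCoeff_one r (by omega),
    expansionCoeff_two r (by omega), ?_⟩
  have hterm (j : ℕ) : (fun n : ℕ => (hasseDeriv j r).eval (log n) * (log (1 + 1 / n) ^ j -
      ∑ i ∈ Finset.range (K + 1), ((logTaylor (K + 2)) ^ j).coeff i * (1 / (n : ℝ)) ^ i))
      =o[atTop] fun n : ℕ => 1 / (n : ℝ) ^ K :=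
    isLittleO_eval_log_mul_of_isBigO _ <|
      (isBigO_log_one_add_pow_sub_sum_coeff (by omega) j).comp_tendsto
        tendsto_one_div_atTop_nhds_zero_nat
  refine (IsLittleO.fun_sum (s := Finset.range (r.natDegree + 1)) fun j _ => hterm j).congr'
    ?_ EventuallyEq.rfl
  filter_upwards [eventually_ne_atTop 0] with n hn
  rw [← eval_add_sub_sum_expansionCoeff, Finset.sum_range_succ_eq_add_sum_Icc,
    expansionCoeff_zero, log_natCast_add_one hn]
  simp only [pow_zero, mul_one, one_div_pow, ← div_eq_mul_one_div]
  ring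

theorem stmt11 (r : Polynomial ℝ) (K : ℕ) (hK : 1 ≤ K) :
    ∃ rs : ℕ → Polynomial ℝ,
      rs 1 = derivative r ∧
      rs 2 = Polynomial.C (1 / 2 : ℝ) * (derivative (derivative r) - derivative r) ∧
      (fun n : ℕ => r.eval (Real.log (n + 1)) - r.eval (Real.log n)
          - ∑ i ∈ Finset.Icc 1 K, (rs i).eval (Real.log n) / (n : ℝ) ^ i)
        =o[atTop] fun n : ℕ => 1 / (n : ℝ) ^ K :=
  stmt11_general r K
end

section
/- Let a_n = r(log n)/n^α where r is a rational function positive for large arguments and α > 0. Then u_n = a_{n-1}a_{n+1}/a_n^2 satisfies u_n = 1 + r_2(log n)/n^2 + O((log n)^C/n^3) for some constant C, where r_2(x) = α + (log r(x))'' - (log r(x))'. -/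
/-!
Write `a n = exp (G (log n))` with `G x = log (r x) - α x`, so that `log (u n)` is the second
difference `G (log (n + 1)) + G (log (n - 1)) - 2 G (log n)`. The steps
`δ± = log (n ± 1) - log n` satisfy `δ± = ±1/n + O(1/n²)` and `δ₊ + δ₋ = log (1 - 1/n²)
= -1/n² + O(1/n⁴)`, so a second-order Taylor expansion of `G` at `log n` gives
`log (u n) = (G'' - G') (log n) / n² + O(1/n³)`, provided `G'`, `G''`, `G'''` are bounded.
They are: the derivatives of `log r` are proper rational functions, hence tend to `0`.
Exponentiating gives the claim.
-/

open Real Filter Asymptotics Polynomial Set Topology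

lemma abs_le_mul_pow_of_hasDerivAt {f f' : ℝ → ℝ} {a b M : ℝ} {k : ℕ}
    (hf : ∀ x ∈ Icc a b, HasDerivAt f (f' x) x) (ha : f a = 0)
    (hf' : ∀ x ∈ Icc a b, |f' x| ≤ M * (x - a) ^ k) :
    ∀ x ∈ Icc a b, |f x| ≤ M / (k + 1) * (x - a) ^ (k + 1) := by
  have hB : ∀ x, HasDerivAt (fun x => M / (k + 1) * (x - a) ^ (k + 1)) (M * (x - a) ^ k) x := by
    intro x
    refine ((((hasDerivAt_id' x).sub_const a).pow (k + 1)).const_mul (M / (k + 1))).congr_deriv ?_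
    push_cast
    field_simp
  exact image_norm_le_of_norm_deriv_right_le_deriv_boundary
    (fun x hx => (hf x hx).continuousAt.continuousWithinAt)
    (fun x hx => (hf x (Ico_subset_Icc_self hx)).hasDerivWithinAt)
    (by simp [ha]) hB (fun x hx => hf' x (Ico_subset_Icc_self hx))

lemma taylor_remainder_two_le_of_le {f f₁ f₂ f₃ : ℝ → ℝ} {a b M : ℝ} (hab : a ≤ b)
    (hf : ∀ x ∈ Icc a b, HasDerivAt f (f₁ x) x)
    (hf₁ : ∀ x ∈ Icc a b, HasDerivAt f₁ (f₂ x) x)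
    (hf₂ : ∀ x ∈ Icc a b, HasDerivAt f₂ (f₃ x) x)
    (hM : ∀ x ∈ Icc a b, |f₃ x| ≤ M) :
    |f b - f a - f₁ a * (b - a) - f₂ a * (b - a) ^ 2 / 2| ≤ M / 6 * (b - a) ^ 3 := by
  have h₂ := abs_le_mul_pow_of_hasDerivAt (k := 0) (f := fun x => f₂ x - f₂ a)
    (fun x hx => (hf₂ x hx).sub_const (f₂ a)) (by simp) (by simpa using hM)
  have h₁ := abs_le_mul_pow_of_hasDerivAt (k := 1) (f := fun x => f₁ x - f₁ a - f₂ a * (x - a))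
    (f' := fun x => f₂ x - f₂ a)
    (fun x hx => by
      refine (((hf₁ x hx).sub_const (f₁ a)).sub
        (((hasDerivAt_id' x).sub_const a).const_mul (f₂ a))).congr_deriv ?_
      ring)
    (by simp) (by simpa using h₂)
  have h₀ := abs_le_mul_pow_of_hasDerivAt (k := 2)
    (f := fun x => f x - f a - f₁ a * (x - a) - f₂ a * (x - a) ^ 2 / 2)
    (f' := fun x => f₁ x - f₁ a - f₂ a * (x - a))
    (fun x hx => by
      refine ((((hf x hx).sub_const (f a)).sub
        (((hasDerivAt_id' x).sub_const a).const_mul (f₁ a))).sub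
        ((((hasDerivAt_id' x).sub_const a).pow 2).const_mul (f₂ a) |>.div_const 2)).congr_deriv ?_
      push_cast
      ring)
    (by simp) (fun x hx => by convert h₁ x hx using 2) b ⟨hab, le_rfl⟩
  convert h₀ using 2; ring

lemma taylor_remainder_two_le {f f₁ f₂ f₃ : ℝ → ℝ} {a b M : ℝ}
    (hf : ∀ x ∈ uIcc a b, HasDerivAt f (f₁ x) x)
    (hf₁ : ∀ x ∈ uIcc a b, HasDerivAt f₁ (f₂ x) x)
    (hf₂ : ∀ x ∈ uIcc a b, HasDerivAt f₂ (f₃ x) x)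
    (hM : ∀ x ∈ uIcc a b, |f₃ x| ≤ M) :
    |f b - f a - f₁ a * (b - a) - f₂ a * (b - a) ^ 2 / 2| ≤ M / 6 * |b - a| ^ 3 := by
  rcases le_total a b with hab | hba
  · rw [uIcc_of_le hab] at *
    rw [abs_of_nonneg (sub_nonneg.2 hab)]
    exact taylor_remainder_two_le_of_le hab hf hf₁ hf₂ hM
  · rw [uIcc_of_ge hba] at *
    have hmem : ∀ x ∈ Icc (-a) (-b), -x ∈ Icc b a :=
      fun x hx => ⟨by linarith [hx.2], by linarith [hx.1]⟩
    have hneg {g g' : ℝ → ℝ} (hg : ∀ x ∈ Icc b a, HasDerivAt g (g' x) x) :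
        ∀ x ∈ Icc (-a) (-b), HasDerivAt (fun x => g (-x)) (-g' (-x)) x := fun x hx =>
      ((hg _ (hmem x hx)).comp x (hasDerivAt_neg x)).congr_deriv (by ring)
    have key := taylor_remainder_two_le_of_le (f₁ := fun x => -f₁ (-x)) (M := M)
      (neg_le_neg hba) (hneg hf) (fun x hx => (hneg hf₁ x hx).neg.congr_deriv (neg_neg _)) (hneg hf₂)
      (fun x hx => by simpa using hM _ (hmem x hx))
    rw [abs_of_nonpos (sub_nonpos.2 hba)]
    convert key using 2 <;> ring_nf

lemma Real.log_one_add_sub_self_isBigO :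
    (fun x : ℝ => log (1 + x) - x) =O[𝓝 0] fun x => x ^ 2 := by
  have h := Complex.log_sub_self_isBigO.comp_tendsto
    (Complex.continuous_ofReal.tendsto' 0 0 Complex.ofReal_zero)
  rw [← Complex.isBigO_ofReal_left, ← Complex.isBigO_ofReal_right]
  refine h.congr' ?_ (by filter_upwards with x; simp)
  filter_upwards [eventually_gt_nhds (show (-1 : ℝ) < 0 by norm_num)] with x hx
  simp [Complex.ofReal_log (by linarith : (0 : ℝ) ≤ 1 + x)]

lemma inv_pow_isBigO_inv_pow {m n : ℕ} (h : m ≤ n) :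
    (fun t : ℝ => t⁻¹ ^ n) =O[atTop] fun t => t⁻¹ ^ m := by
  rcases h.lt_or_eq with h | rfl
  · exact ((isLittleO_pow_pow h).comp_tendsto tendsto_inv_atTop_zero).isBigO
  · exact isBigO_refl _ _

lemma log_add_sub_log_sub_isBigO (c : ℝ) :
    (fun t => log (t + c) - log t - c * t⁻¹) =O[atTop] fun t => t⁻¹ ^ 2 := by
  have hc : Tendsto (fun t : ℝ => c * t⁻¹) atTop (𝓝 0) := by
    simpa using tendsto_inv_atTop_zero.const_mul c
  have h := (log_one_add_sub_self_isBigO.comp_tendsto hc).trans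
    ((isBigO_refl (fun t : ℝ => t⁻¹ ^ 2) atTop).const_mul_left (c ^ 2) |>.congr_left
      fun t => by simp only [Function.comp_apply]; ring)
  refine h.congr' ?_ EventuallyEq.rfl
  filter_upwards [eventually_gt_atTop 0, eventually_gt_atTop (-c)] with t ht htc
  rw [Function.comp_apply, ← log_div (by linarith) ht.ne']
  congr 2
  field_simp

lemma log_add_one_add_log_sub_one_isBigO :
    (fun t => log (t + 1) + log (t - 1) - 2 * log t + t⁻¹ ^ 2) =O[atTop] fun t => t⁻¹ ^ 3 := by
  have hc : Tendsto (fun t : ℝ => -t⁻¹ ^ 2) atTop (𝓝 0) := by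
    simpa using ((tendsto_inv_atTop_zero (𝕜 := ℝ)).pow 2).neg
  have h := (log_one_add_sub_self_isBigO.comp_tendsto hc).trans
    ((inv_pow_isBigO_inv_pow (by norm_num : 3 ≤ 4)).congr_left fun t => by
      simp only [Function.comp_apply]; ring)
  refine h.congr' ?_ EventuallyEq.rfl
  filter_upwards [eventually_gt_atTop 1] with t ht
  rw [Function.comp_apply, two_mul, ← log_mul (by linarith) (by linarith),
    ← log_mul (by positivity) (by positivity), ← log_div (by positivity) (by positivity),
    sub_neg_eq_add]
  congr 2
  field_simp
  ring

lemma taylor_remainder_two_isBigO {ι : Type*} {l : Filter ι} {f f₁ f₂ f₃ : ℝ → ℝ}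
    {a δ : ι → ℝ}
    (hf : ∀ᶠ x in atTop, HasDerivAt f (f₁ x) x)
    (hf₁ : ∀ᶠ x in atTop, HasDerivAt f₁ (f₂ x) x)
    (hf₂ : ∀ᶠ x in atTop, HasDerivAt f₂ (f₃ x) x)
    (hf₃ : f₃ =O[atTop] fun _ => (1 : ℝ))
    (ha : Tendsto a l atTop) (hδ : Tendsto δ l (𝓝 0)) :
    (fun i => f (a i + δ i) - f (a i) - f₁ (a i) * δ i - f₂ (a i) * δ i ^ 2 / 2)
      =O[l] fun i => δ i ^ 3 := by
  obtain ⟨M, hM⟩ := hf₃.bound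
  obtain ⟨X, hX⟩ := eventually_atTop.1 (hf.and (hf₁.and (hf₂.and hM)))
  refine IsBigO.of_bound (M / 6) ?_
  filter_upwards [ha.eventually_ge_atTop (X + 1), hδ.eventually (Ioo_mem_nhds
    (show (-1 : ℝ) < 0 by norm_num) one_pos)] with i hai hδi
  have hX' : ∀ x ∈ uIcc (a i) (a i + δ i), X ≤ x := fun x hx =>
    le_trans (le_inf (by linarith) (by linarith [hδi.1])) hx.1
  have key := taylor_remainder_two_le (fun x hx => (hX x (hX' x hx)).1)
    (fun x hx => (hX x (hX' x hx)).2.1) (fun x hx => (hX x (hX' x hx)).2.2.1)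
    (M := M) (fun x hx => by simpa using (hX x (hX' x hx)).2.2.2)
  simpa [abs_pow] using key

lemma second_difference_comp_log_isBigO {G G₁ G₂ G₃ : ℝ → ℝ}
    (hG : ∀ᶠ x in atTop, HasDerivAt G (G₁ x) x)
    (hG₁ : ∀ᶠ x in atTop, HasDerivAt G₁ (G₂ x) x)
    (hG₂ : ∀ᶠ x in atTop, HasDerivAt G₂ (G₃ x) x)
    (hb₁ : G₁ =O[atTop] fun _ => (1 : ℝ)) (hb₂ : G₂ =O[atTop] fun _ => (1 : ℝ))
    (hb₃ : G₃ =O[atTop] fun _ => (1 : ℝ)) :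
    (fun t => G (log (t + 1)) + G (log (t - 1)) - 2 * G (log t)
      - (G₂ (log t) - G₁ (log t)) * t⁻¹ ^ 2) =O[atTop] fun t => t⁻¹ ^ 3 := by
  set δp : ℝ → ℝ := fun t => log (t + 1) - log t
  set δm : ℝ → ℝ := fun t => log (t - 1) - log t
  have hep : (fun t => δp t - t⁻¹) =O[atTop] fun t => t⁻¹ ^ 2 := by
    simpa using log_add_sub_log_sub_isBigO 1
  have hem : (fun t => δm t + t⁻¹) =O[atTop] fun t => t⁻¹ ^ 2 := by
    simpa [← sub_eq_add_neg] using log_add_sub_log_sub_isBigO (-1)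
  have hinv : (fun t : ℝ => t⁻¹) =O[atTop] fun t => t⁻¹ ^ 1 := by simp [isBigO_refl]
  have hδp : δp =O[atTop] fun t => t⁻¹ :=
    ((hep.trans (inv_pow_isBigO_inv_pow one_le_two)).add hinv).congr (by simp) (by simp)
  have hδm : δm =O[atTop] fun t => t⁻¹ :=
    ((hem.trans (inv_pow_isBigO_inv_pow one_le_two)).sub hinv).congr (by simp) (by simp)
  have hTp := (taylor_remainder_two_isBigO hG hG₁ hG₂ hb₃ tendsto_log_atTop
    (hδp.trans_tendsto tendsto_inv_atTop_zero)).trans (hδp.pow 3)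
  have hTm := (taylor_remainder_two_isBigO hG hG₁ hG₂ hb₃ tendsto_log_atTop
    (hδm.trans_tendsto tendsto_inv_atTop_zero)).trans (hδm.pow 3)
  have hsum : (fun t => δp t + δm t + t⁻¹ ^ 2) =O[atTop] fun t => t⁻¹ ^ 3 :=
    log_add_one_add_log_sub_one_isBigO.congr_left fun t => by ring
  have hsq : (fun t => (δp t ^ 2 + δm t ^ 2) / 2 - t⁻¹ ^ 2) =O[atTop] fun t => t⁻¹ ^ 3 := by
    have h := ((hep.mul (hδp.add (isBigO_refl _ _))).add
      (hem.mul (hδm.sub (isBigO_refl _ _)))).const_mul_left (1 / 2)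
    exact h.congr (fun t => by ring) (fun t => by ring)
  have h := (hTp.add hTm).add
    ((((hb₁.comp_tendsto tendsto_log_atTop).mul hsum).add
      ((hb₂.comp_tendsto tendsto_log_atTop).mul hsq)).congr_right fun t => by simp)
  refine h.congr_left fun t => ?_
  simp only [δp, δm, Function.comp_apply, add_sub_cancel]
  ring

lemma exp_sub_one_add_mul_sq_isBigO {ι : Type*} {l : Filter ι} {S c g : ι → ℝ}
    (hg : Tendsto g l (𝓝 0)) (hc : c =O[l] fun _ => (1 : ℝ))
    (hS : (fun i => S i - c i * g i ^ 2) =O[l] fun i => g i ^ 3) :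
    (fun i => exp (S i) - (1 + c i * g i ^ 2)) =O[l] fun i => g i ^ 3 := by
  have hpow {m n : ℕ} (h : m < n) : (fun i => g i ^ n) =O[l] fun i => g i ^ m :=
    ((isLittleO_pow_pow h).comp_tendsto hg).isBigO
  have hS₂ : S =O[l] fun i => g i ^ 2 :=
    ((hS.trans (hpow (by norm_num))).add ((hc.mul (isBigO_refl (fun i => g i ^ 2) l)).congr_right
      fun i => one_mul _)).congr_left fun i => by ring
  have hS₀ : Tendsto S l (𝓝 0) := hS₂.trans_tendsto (by simpa using hg.pow 2)
  have hexp : (fun i => exp (S i) - 1 - S i) =O[l] fun i => S i ^ 2 := by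
    simpa [Finset.sum_range_succ, sub_sub, Function.comp_def] using
      (Real.exp_sub_sum_range_isBigO_pow 2).comp_tendsto hS₀
  have hsq : (fun i => S i ^ 2) =O[l] fun i => g i ^ 3 :=
    ((hS₂.pow 2).congr_right fun i => by ring).trans (hpow (by norm_num : 3 < 4))
  exact ((hexp.trans hsq).add hS).congr_left fun i => by ring

lemma exp_second_difference_comp_log_isBigO {G G₁ G₂ G₃ : ℝ → ℝ}
    (hG : ∀ᶠ x in atTop, HasDerivAt G (G₁ x) x)
    (hG₁ : ∀ᶠ x in atTop, HasDerivAt G₁ (G₂ x) x)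
    (hG₂ : ∀ᶠ x in atTop, HasDerivAt G₂ (G₃ x) x)
    (hb₁ : G₁ =O[atTop] fun _ => (1 : ℝ)) (hb₂ : G₂ =O[atTop] fun _ => (1 : ℝ))
    (hb₃ : G₃ =O[atTop] fun _ => (1 : ℝ)) :
    (fun t => exp (G (log (t + 1)) + G (log (t - 1)) - 2 * G (log t))
      - (1 + (G₂ (log t) - G₁ (log t)) * t⁻¹ ^ 2)) =O[atTop] fun t => t⁻¹ ^ 3 :=
  exp_sub_one_add_mul_sq_isBigO tendsto_inv_atTop_zero
    ((hb₂.sub hb₁).comp_tendsto tendsto_log_atTop)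
    (second_difference_comp_log_isBigO hG hG₁ hG₂ hb₁ hb₂ hb₃)

lemma eventually_mul_div_sq_eq_exp {a : ℕ → ℝ} {G : ℝ → ℝ}
    (ha : ∀ᶠ n : ℕ in atTop, a n = exp (G (log n))) :
    ∀ᶠ n : ℕ in atTop, a (n - 1) * a (n + 1) / a n ^ 2
      = exp (G (log (n + 1)) + G (log (n - 1)) - 2 * G (log n)) := by
  filter_upwards [ha, (tendsto_sub_atTop_nat 1).eventually ha,
    (tendsto_add_atTop_nat 1).eventually ha, eventually_ge_atTop 1] with n hcur hprev hnext hn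
  rw [hcur, hprev, hnext, Nat.cast_sub hn, Nat.cast_add, Nat.cast_one, ← exp_add, ← exp_nat_mul,
    ← exp_sub]
  congr 1
  push_cast
  ring

def IsProperRationalFunction (f : ℝ → ℝ) : Prop :=
  ∃ P Q : ℝ[X], P.degree < Q.degree ∧ f = fun x => P.eval x / Q.eval x

lemma Polynomial.degree_derivative_mul_sub_mul_derivative_lt {R : Type*} [CommRing R]
    [NoZeroDivisors R] {p q : R[X]} (hp : p ≠ 0) (hq : q ≠ 0) :
    (derivative p * q - p * derivative q).degree < (p * q).degree := by
  refine (degree_sub_le _ _).trans_lt (max_lt ?_ ?_) <;> rw [degree_mul, degree_mul]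
  · exact WithBot.add_lt_add_right (degree_ne_bot.2 hq) (degree_derivative_lt hp)
  · exact WithBot.add_lt_add_left (degree_ne_bot.2 hp) (degree_derivative_lt hq)

namespace IsProperRationalFunction

variable {f : ℝ → ℝ}

lemma tendsto_zero (hf : IsProperRationalFunction f) : Tendsto f atTop (𝓝 0) := by
  obtain ⟨P, Q, hPQ, rfl⟩ := hf
  exact div_tendsto_atTop_zero_of_degree_lt P Q hPQ

lemma isBigO_one (hf : IsProperRationalFunction f) : f =O[atTop] fun _ => (1 : ℝ) :=
  hf.tendsto_zero.isBigO_one ℝ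

lemma exists_hasDerivAt (hf : IsProperRationalFunction f) :
    ∃ f', IsProperRationalFunction f' ∧ ∀ᶠ x in atTop, HasDerivAt f (f' x) x := by
  obtain ⟨P, Q, hPQ, rfl⟩ := hf
  have hQ : Q ≠ 0 := ne_zero_of_degree_gt hPQ
  refine ⟨_, ⟨derivative P * Q - P * derivative Q, Q ^ 2, ?_, rfl⟩, ?_⟩
  · rcases eq_or_ne P 0 with rfl | hP
    · rw [derivative_zero, zero_mul, zero_mul, sub_zero, degree_zero, bot_lt_iff_ne_bot, Ne,
        degree_eq_bot]
      exact pow_ne_zero 2 hQ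
    · refine (degree_derivative_mul_sub_mul_derivative_lt hP hQ).trans ?_
      rw [degree_mul, sq, degree_mul]
      exact WithBot.add_lt_add_right (degree_ne_bot.2 hQ) hPQ
  · filter_upwards [eventually_atTop_not_isRoot Q hQ] with x hx
    exact ((P.hasDerivAt x).div (Q.hasDerivAt x) hx).congr_deriv (by simp)

end IsProperRationalFunction

lemma exists_hasDerivAt_log_eval_div {p q : ℝ[X]} (hp : p ≠ 0) (hq : q ≠ 0) :
    ∃ f', IsProperRationalFunction f' ∧
      ∀ᶠ x in atTop, HasDerivAt (fun x => log (p.eval x / q.eval x)) (f' x) x := by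
  refine ⟨_, ⟨derivative p * q - p * derivative q, p * q,
    degree_derivative_mul_sub_mul_derivative_lt hp hq, rfl⟩, ?_⟩
  filter_upwards [eventually_atTop_not_isRoot p hp, eventually_atTop_not_isRoot q hq]
    with x hpx hqx
  refine (((p.hasDerivAt x).div (q.hasDerivAt x) hqx).log (div_ne_zero hpx hqx)).congr_deriv ?_
  simp only [eval_sub, eval_mul, Pi.div_apply]
  field_simp

lemma Filter.EventuallyEq.deriv_atTop {f g : ℝ → ℝ} (h : f =ᶠ[atTop] g) :
    deriv f =ᶠ[atTop] deriv g := by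
  obtain ⟨X, hX⟩ := eventually_atTop.1 h
  filter_upwards [eventually_gt_atTop X] with x hx
  exact EventuallyEq.deriv_eq (eventually_of_mem (Ioi_mem_nhds hx) fun y hy => hX y hy.le)

theorem stmt13_general (p q : Polynomial ℝ) (hq : q ≠ 0) (r : ℝ → ℝ)
    (hr : ∀ x, r x = p.eval x / q.eval x)
    (hrpos : ∀ᶠ x in atTop, 0 < r x)
    (α : ℝ) (a u : ℕ → ℝ)
    (ha : ∀ n : ℕ, 1 ≤ n → a n = r (Real.log n) / (n : ℝ) ^ α)
    (hu : ∀ n : ℕ, 2 ≤ n → u n = a (n - 1) * a (n + 1) / (a n) ^ 2) :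
    ∃ C : ℝ,
      (fun n : ℕ => u n - (1 + (α + deriv (deriv (fun x => Real.log (r x))) (Real.log n)
            - deriv (fun x => Real.log (r x)) (Real.log n)) / (n : ℝ) ^ 2))
        =O[atTop] fun n : ℕ => (Real.log n) ^ C / (n : ℝ) ^ 3 := by
  have hp : p ≠ 0 := by
    rintro rfl
    simpa [hr] using hrpos.exists
  obtain rfl : r = fun x => p.eval x / q.eval x := funext hr
  beta_reduce at ha hrpos ⊢
  set L : ℝ → ℝ := fun x => log (p.eval x / q.eval x)
  set G : ℝ → ℝ := fun x => L x - α * x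
  obtain ⟨L₁, hL₁, hL⟩ := exists_hasDerivAt_log_eval_div hp hq
  obtain ⟨L₂, hL₂, hL₁'⟩ := hL₁.exists_hasDerivAt
  obtain ⟨L₃, hL₃, hL₂'⟩ := hL₂.exists_hasDerivAt
  have key := exp_second_difference_comp_log_isBigO (G := G)
    (hL.mono fun x h => (h.sub ((hasDerivAt_id' x).const_mul α)).congr_deriv (by ring))
    (hL₁'.mono fun x h => h.sub_const α) hL₂'
    ((hL₁.tendsto_zero.sub_const α).isBigO_one ℝ) hL₂.isBigO_one hL₃.isBigO_one
  have hdL : deriv L =ᶠ[atTop] L₁ := hL.mono fun x h => h.deriv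
  have hddL : deriv (deriv L) =ᶠ[atTop] L₂ := hdL.deriv_atTop.trans (hL₁'.mono fun x h => h.deriv)
  have hlog := tendsto_log_atTop.comp tendsto_natCast_atTop_atTop
  have hexp : ∀ᶠ n : ℕ in atTop, a n = exp (G (log n)) := by
    filter_upwards [hlog.eventually hrpos, eventually_ge_atTop 1] with n hpos hn
    rw [Function.comp_apply] at hpos
    rw [ha n hn, rpow_def_of_pos (by positivity), mul_comm, ← exp_log hpos, ← exp_sub]
  refine ⟨0, (key.comp_tendsto tendsto_natCast_atTop_atTop).congr' ?_ ?_⟩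
  · filter_upwards [eventually_mul_div_sq_eq_exp hexp, hlog.eventually hdL,
      hlog.eventually hddL, eventually_ge_atTop 2] with n hratio h₁ h₂ hn
    simp only [Function.comp_apply] at h₁ h₂ ⊢
    rw [hu n hn, hratio, h₁, h₂]
    ring
  · filter_upwards with n
    simp

theorem stmt13 (p q : Polynomial ℝ) (hq : q ≠ 0) (r : ℝ → ℝ)
    (hr : ∀ x, r x = p.eval x / q.eval x)
    (hrpos : ∀ᶠ x in atTop, 0 < r x)
    (α : ℝ) (hα : 0 < α) (a u : ℕ → ℝ)
    (ha : ∀ n : ℕ, 1 ≤ n → a n = r (Real.log n) / (n : ℝ) ^ α)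
    (hu : ∀ n : ℕ, 2 ≤ n → u n = a (n - 1) * a (n + 1) / (a n) ^ 2) :
    ∃ C : ℝ,
      (fun n : ℕ => u n - (1 + (α + deriv (deriv (fun x => Real.log (r x))) (Real.log n)
            - deriv (fun x => Real.log (r x)) (Real.log n)) / (n : ℝ) ^ 2))
        =O[atTop] fun n : ℕ => (Real.log n) ^ C / (n : ℝ) ^ 3 :=
  stmt13_general p q hq r hr hrpos α a u ha hu
end

section
/- Let a_n = r(log n)/n^α where r is a rational function and α > 0. Then a_{n+1} + a_{n-1} - 2a_n = r̃_2(log n)/n^{2+α} + o((log n)^C/n^{2+α}) where r̃_2(x) = α(α+1)r(x) - (2α+1)r'(x) + r''(x). -/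
/-!
Put `f y = r (log y) * y ^ (-α)`, so that `a n = f n`. By Taylor's formula the second
difference `f (n + 1) + f (n - 1) - 2 f n` is `f'' n` up to a constant times the maximum of
`|f'''|` on `[n - 1, n + 1]`. Differentiating `y ↦ s (log y) * y ^ (-c)` gives
`(s' - c s) (log y) * y ^ (-(c + 1))`, so `f'' y = r̃₂ (log y) * y ^ (-(α + 2))` and
`f''' y = r̃₃ (log y) * y ^ (-(α + 3))`, where `r̃₃` is again a rational function. Rational
functions grow at most polynomially, hence
`|f'''| ≪ (log n) ^ D * n ^ (-(α + 3)) = o ((log n) ^ D / n ^ (2 + α))`.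
-/

open Real Filter Asymptotics Polynomial Topology Metric

theorem Filter.EventuallyEq.eventually_eventuallyEq_nhds {α β : Type*} [LinearOrder α]
    [TopologicalSpace α] [OrderTopology α] [Nonempty α] [NoMaxOrder α] {f g : α → β}
    (h : f =ᶠ[atTop] g) : ∀ᶠ t in atTop, f =ᶠ[𝓝 t] g := by
  obtain ⟨T, hT⟩ := eventually_atTop.1 h
  filter_upwards [eventually_gt_atTop T] with t ht
  filter_upwards [Ioi_mem_nhds ht] with y hy using hT y hy.le

theorem Polynomial.hasDerivAt_eval_div_eval (p q : ℝ[X]) {x : ℝ} (hq : q.eval x ≠ 0) :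
    HasDerivAt (fun t => p.eval t / q.eval t)
      ((derivative p * q - p * derivative q).eval x / (q ^ 2).eval x) x := by
  simpa only [eval_mul, eval_sub, eval_pow, sq, Pi.div_def] using
    (p.hasDerivAt x).div (q.hasDerivAt x) hq

def IsEventuallyRational (g : ℝ → ℝ) : Prop :=
  ∃ p q : ℝ[X], q ≠ 0 ∧ g =ᶠ[atTop] fun t => p.eval t / q.eval t

namespace IsEventuallyRational

variable {g g₁ g₂ : ℝ → ℝ}

theorem sub (h₁ : IsEventuallyRational g₁) (h₂ : IsEventuallyRational g₂) :
    IsEventuallyRational (fun t => g₁ t - g₂ t) := by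
  obtain ⟨p₁, q₁, hq₁, e₁⟩ := h₁
  obtain ⟨p₂, q₂, hq₂, e₂⟩ := h₂
  refine ⟨p₁ * q₂ - p₂ * q₁, q₁ * q₂, mul_ne_zero hq₁ hq₂, ?_⟩
  filter_upwards [e₁, e₂, eventually_atTop_not_isRoot q₁ hq₁, eventually_atTop_not_isRoot q₂ hq₂]
    with t ht₁ ht₂ hn₁ hn₂
  rw [ht₁, ht₂, eval_sub, eval_mul, eval_mul, eval_mul, div_sub_div _ _ hn₁ hn₂,
    mul_comm (eval t q₁)]

theorem const_mul (h : IsEventuallyRational g) (k : ℝ) :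
    IsEventuallyRational (fun t => k * g t) := by
  obtain ⟨p, q, hq, e⟩ := h
  refine ⟨C k * p, q, hq, ?_⟩
  filter_upwards [e] with t ht
  rw [ht, eval_mul, eval_C, mul_div_assoc]

theorem deriv (h : IsEventuallyRational g) : IsEventuallyRational (deriv g) := by
  obtain ⟨p, q, hq, e⟩ := h
  refine ⟨derivative p * q - p * derivative q, q ^ 2, pow_ne_zero 2 hq, ?_⟩
  filter_upwards [e.eventually_eventuallyEq_nhds, eventually_atTop_not_isRoot q hq] with t ht hn
  rw [ht.deriv_eq, (hasDerivAt_eval_div_eval p q hn).deriv]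

theorem eventually_hasDerivAt (h : IsEventuallyRational g) :
    ∀ᶠ t in atTop, HasDerivAt g (_root_.deriv g t) t := by
  obtain ⟨p, q, hq, e⟩ := h
  filter_upwards [e.eventually_eventuallyEq_nhds, eventually_atTop_not_isRoot q hq] with t ht hn
  exact ((hasDerivAt_eval_div_eval p q hn).congr_of_eventuallyEq ht).differentiableAt.hasDerivAt

theorem exists_isBigO_pow (h : IsEventuallyRational g) : ∃ D : ℕ, g =O[atTop] fun t => t ^ D := by
  obtain ⟨p, q, -, e⟩ := h
  refine ⟨p.natDegree, e.trans_isBigO ((isEquivalent_atTop_div p q).isBigO.trans ?_)⟩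
  refine IsBigO.const_mul_left (IsBigO.of_bound 1 ?_) _
  filter_upwards [eventually_ge_atTop 1] with t ht
  have ht₀ : 0 ≤ t := zero_le_one.trans ht
  rw [norm_of_nonneg (zpow_nonneg ht₀ _), norm_of_nonneg (pow_nonneg ht₀ _), one_mul,
    ← zpow_natCast]
  exact zpow_le_zpow_right₀ ht (by omega)

end IsEventuallyRational

section SecondDifference

variable {E : Type*} [NormedAddCommGroup E] [NormedSpace ℝ E]

theorem norm_sub_le_mul_radius_of_norm_deriv_le {g g' : ℝ → E} {x h M : ℝ}
    (hg : ∀ y ∈ closedBall x h, HasDerivAt g (g' y) y) (hM : ∀ y ∈ closedBall x h, ‖g' y‖ ≤ M)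
    {y : ℝ} (hy : y ∈ closedBall x h) : ‖g y - g x‖ ≤ M * h := by
  have hx : x ∈ closedBall x h := mem_closedBall_self (dist_nonneg.trans hy)
  calc ‖g y - g x‖ ≤ M * ‖y - x‖ :=
        (convex_closedBall x h).norm_image_sub_le_of_norm_hasDerivWithin_le
          (fun z hz => (hg z hz).hasDerivWithinAt) hM hx hy
    _ ≤ M * h := mul_le_mul_of_nonneg_left hy ((norm_nonneg _).trans (hM x hx))

theorem norm_secondDifference_sub_le {f f₁ f₂ f₃ : ℝ → E} {x h B : ℝ} (hh : 0 ≤ h)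
    (hf : ∀ y ∈ closedBall x h, HasDerivAt f (f₁ y) y)
    (hf₁ : ∀ y ∈ closedBall x h, HasDerivAt f₁ (f₂ y) y)
    (hf₂ : ∀ y ∈ closedBall x h, HasDerivAt f₂ (f₃ y) y)
    (hB : ∀ y ∈ closedBall x h, ‖f₃ y‖ ≤ B) :
    ‖f (x + h) + f (x - h) - (2 : ℝ) • f x - h ^ 2 • f₂ x‖ ≤ 2 * B * h ^ 3 := by
  -- `ψ` and `φ` are the Taylor remainders of `f₁` and `f` at `x`; the mean value inequality
  -- bounds `f₂ - f₂ x`, then `ψ`, then `φ`.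
  set ψ : ℝ → E := fun z => f₁ z - f₁ x - (z - x) • f₂ x
  set φ : ℝ → E := fun z => f z - f x - (z - x) • f₁ x - ((z - x) ^ 2 / 2) • f₂ x
  have hψ : ∀ y ∈ closedBall x h, HasDerivAt ψ (f₂ y - f₂ x) y := fun y hy =>
    (((hf₁ y hy).sub_const (f₁ x)).sub
      (((hasDerivAt_id y).sub_const x).smul_const (f₂ x))).congr_deriv (by simp)
  have hφ : ∀ y ∈ closedBall x h, HasDerivAt φ (ψ y) y := fun y hy => by
    have hsq : HasDerivAt (fun z => (z - x) ^ 2 / 2) (y - x) y := by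
      simpa using (((hasDerivAt_id y).sub_const x).pow 2).div_const 2
    exact ((((hf y hy).sub_const (f x)).sub
      (((hasDerivAt_id y).sub_const x).smul_const (f₁ x))).sub
      (hsq.smul_const (f₂ x))).congr_deriv (by simp [ψ])
  have hψ_le : ∀ y ∈ closedBall x h, ‖ψ y‖ ≤ B * h * h := fun y hy => by
    simpa [ψ] using norm_sub_le_mul_radius_of_norm_deriv_le hψ
      (fun z hz => norm_sub_le_mul_radius_of_norm_deriv_le hf₂ hB hz) hy
  have hφ_le : ∀ y ∈ closedBall x h, ‖φ y‖ ≤ B * h * h * h := fun y hy => by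
    simpa [φ] using norm_sub_le_mul_radius_of_norm_deriv_le hφ hψ_le hy
  have hmem : ∀ y, |y - x| ≤ h → y ∈ closedBall x h := fun y hy => by
    rwa [mem_closedBall, dist_eq]
  have hsplit :
      f (x + h) + f (x - h) - (2 : ℝ) • f x - h ^ 2 • f₂ x = φ (x + h) + φ (x - h) := by
    simp only [φ, add_sub_cancel_left, sub_sub_cancel_left, neg_sq]
    module
  rw [hsplit]
  calc ‖φ (x + h) + φ (x - h)‖ ≤ ‖φ (x + h)‖ + ‖φ (x - h)‖ := norm_add_le _ _
    _ ≤ B * h * h * h + B * h * h * h :=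
        add_le_add (hφ_le _ (hmem _ (by simp [abs_of_nonneg hh])))
          (hφ_le _ (hmem _ (by simp [abs_of_nonneg hh])))
    _ = 2 * B * h ^ 3 := by ring

end SecondDifference

theorem hasDerivAt_comp_log_mul_rpow_neg {s s₁ : ℝ → ℝ} {x : ℝ} (c : ℝ)
    (hs : HasDerivAt s (s₁ (log x) + c * s (log x)) (log x)) (hx : 0 < x) :
    HasDerivAt (fun y => s (log y) * y ^ (-c)) (s₁ (log x) * x ^ (-(c + 1))) x := by
  have hpow : x ^ (-c - 1) = x⁻¹ * x ^ (-c) := by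
    rw [sub_eq_neg_add, rpow_add hx, rpow_neg_one]
  refine ((hs.comp x (hasDerivAt_log hx.ne')).mul
    (hasDerivAt_rpow_const (p := -c) (Or.inl hx.ne'))).congr_deriv ?_
  rw [neg_add', hpow, Function.comp_apply]
  ring

theorem isBigO_secondDifference_comp_log_mul_rpow {s₀ s₁ s₂ s₃ : ℝ → ℝ} {c : ℝ} {D : ℕ}
    (hc : -3 ≤ c) (h₀ : ∀ᶠ t in atTop, HasDerivAt s₀ (s₁ t + c * s₀ t) t)
    (h₁ : ∀ᶠ t in atTop, HasDerivAt s₁ (s₂ t + (c + 1) * s₁ t) t)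
    (h₂ : ∀ᶠ t in atTop, HasDerivAt s₂ (s₃ t + (c + 2) * s₂ t) t)
    (h₃ : s₃ =O[atTop] fun t => t ^ D) :
    (fun x => s₀ (log (x + 1)) * (x + 1) ^ (-c) + s₀ (log (x - 1)) * (x - 1) ^ (-c)
        - 2 * (s₀ (log x) * x ^ (-c)) - s₂ (log x) * x ^ (-(c + 2)))
      =O[atTop] fun x => log x ^ D * x ^ (-(c + 3)) := by
  obtain ⟨K, hK, hK₃⟩ := h₃.exists_pos
  obtain ⟨T, hT⟩ := eventually_atTop.1
    (h₀.and (h₁.and (h₂.and (hK₃.bound.and (eventually_ge_atTop 0)))))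
  have hderiv : ∀ y, 0 < y → T ≤ log y →
      HasDerivAt (fun y => s₀ (log y) * y ^ (-c)) (s₁ (log y) * y ^ (-(c + 1))) y ∧
      HasDerivAt (fun y => s₁ (log y) * y ^ (-(c + 1))) (s₂ (log y) * y ^ (-(c + 2))) y ∧
      HasDerivAt (fun y => s₂ (log y) * y ^ (-(c + 2))) (s₃ (log y) * y ^ (-(c + 3))) y ∧
      |s₃ (log y) * y ^ (-(c + 3))| ≤ K * log y ^ D * y ^ (-(c + 3)) := by
    intro y hy hTy
    obtain ⟨d₀, d₁, d₂, hb, hlog⟩ := hT _ hTy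
    refine ⟨hasDerivAt_comp_log_mul_rpow_neg c d₀ hy, ?_, ?_, ?_⟩
    · simpa only [add_assoc, one_add_one_eq_two] using hasDerivAt_comp_log_mul_rpow_neg _ d₁ hy
    · simpa only [add_assoc, two_add_one_eq_three] using hasDerivAt_comp_log_mul_rpow_neg _ d₂ hy
    · rw [abs_mul, abs_of_nonneg (rpow_nonneg hy.le _)]
      gcongr
      simpa [abs_of_nonneg hlog] using hb
  refine IsBigO.of_bound (2 * K * 2 ^ D / 2 ^ (-(c + 3))) ?_
  filter_upwards [eventually_ge_atTop 2,
    (tendsto_log_atTop.comp (tendsto_id.atTop_div_const two_pos)).eventually_ge_atTop T]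
    with x hx hTx
  have hx₀ : 0 < x := by linarith
  have hlogx : 0 ≤ log x := log_nonneg (by linarith)
  have hball : ∀ y ∈ closedBall x 1, x / 2 ≤ y ∧ y ≤ x ^ 2 := fun y hy => by
    rw [mem_closedBall, dist_eq, abs_le] at hy
    constructor <;> nlinarith
  have hlog : ∀ y ∈ closedBall x 1, T ≤ log y ∧ log y ≤ 2 * log x := fun y hy => by
    obtain ⟨hy₁, hy₂⟩ := hball y hy
    refine ⟨hTx.trans (log_le_log (by positivity) hy₁), ?_⟩
    calc log y ≤ log (x ^ 2) := log_le_log (by linarith) hy₂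
      _ = 2 * log x := by rw [log_pow, Nat.cast_ofNat]
  set B := K * (2 * log x) ^ D * (x / 2) ^ (-(c + 3))
  have hB : ∀ y ∈ closedBall x 1, ‖s₃ (log y) * y ^ (-(c + 3))‖ ≤ B := fun y hy => by
    obtain ⟨hy₁, hy₂⟩ := hball y hy
    obtain ⟨hTy, hy₃⟩ := hlog y hy
    have hy₀ : 0 < y := by linarith
    have hlog₀ : 0 ≤ log y := (hT _ hTy).2.2.2.2
    refine ((hderiv y hy₀ hTy).2.2.2).trans ?_
    exact mul_le_mul (mul_le_mul_of_nonneg_left (pow_le_pow_left₀ hlog₀ hy₃ D) hK.le)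
      (rpow_le_rpow_of_nonpos (by positivity) hy₁ (by linarith)) (rpow_nonneg hy₀.le _)
      (by positivity)
  have hsd := norm_secondDifference_sub_le zero_le_one
    (fun y hy => (hderiv y (by linarith [(hball y hy).1]) (hlog y hy).1).1)
    (fun y hy => (hderiv y (by linarith [(hball y hy).1]) (hlog y hy).1).2.1)
    (fun y hy => (hderiv y (by linarith [(hball y hy).1]) (hlog y hy).1).2.2.1) hB
  simp only [smul_eq_mul, one_pow, one_mul, mul_one] at hsd
  refine hsd.trans (le_of_eq ?_)
  rw [norm_of_nonneg (by positivity)]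
  simp only [B, div_rpow hx₀.le zero_le_two, mul_pow]
  ring

theorem exists_isLittleO_secondDifference_comp_log_mul_rpow {s : ℝ → ℝ}
    (hs : IsEventuallyRational s) {c : ℝ} (hc : -3 ≤ c) :
    ∃ D : ℕ,
      (fun x => s (log (x + 1)) * (x + 1) ^ (-c) + s (log (x - 1)) * (x - 1) ^ (-c)
          - 2 * (s (log x) * x ^ (-c))
          - (c * (c + 1) * s (log x) - (2 * c + 1) * deriv s (log x) + deriv (deriv s) (log x))
            / x ^ (c + 2))
        =o[atTop] fun x => log x ^ D / x ^ (c + 2) := by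
  set s₁ := fun t => deriv s t - c * s t
  set s₂ := fun t => deriv s₁ t - (c + 1) * s₁ t
  have hs₁ : IsEventuallyRational s₁ := hs.deriv.sub (hs.const_mul c)
  have hs₂ : IsEventuallyRational s₂ := hs₁.deriv.sub (hs₁.const_mul (c + 1))
  obtain ⟨D, hD⟩ := (hs₂.deriv.sub (hs₂.const_mul (c + 2))).exists_isBigO_pow
  have hderiv : ∀ {g : ℝ → ℝ}, IsEventuallyRational g → ∀ k : ℝ,
      ∀ᶠ t in atTop, HasDerivAt g ((deriv g t - k * g t) + k * g t) t := fun hg k => by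
    simpa only [sub_add_cancel] using hg.eventually_hasDerivAt
  have hO := isBigO_secondDifference_comp_log_mul_rpow hc (hderiv hs c) (hderiv hs₁ (c + 1))
    (hderiv hs₂ (c + 2)) hD
  have hs₂_eq : ∀ᶠ t in atTop,
      s₂ t = c * (c + 1) * s t - (2 * c + 1) * deriv s t + deriv (deriv s) t := by
    filter_upwards [hs.eventually_hasDerivAt, hs.deriv.eventually_hasDerivAt] with t h₀ h₁
    simp only [s₂, s₁]
    rw [deriv_fun_sub h₁.differentiableAt (h₀.differentiableAt.const_mul c),
      deriv_const_mul _ h₀.differentiableAt]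
    ring
  have hinv :
      (fun x => log x ^ D * x ^ (-(c + 3))) =o[atTop] fun x => log x ^ D / x ^ (c + 2) := by
    have h :
        (fun x => log x ^ D / x ^ (c + 2) * x⁻¹) =o[atTop] fun x => log x ^ D / x ^ (c + 2) := by
      simpa using (isBigO_refl (fun x => log x ^ D / x ^ (c + 2)) atTop).mul_isLittleO
        ((isLittleO_one_iff ℝ).2 tendsto_inv_atTop_zero)
    refine h.congr' ?_ EventuallyEq.rfl
    filter_upwards [eventually_gt_atTop 0] with x hx
    rw [show -(c + 3) = -(c + 2) + -1 by ring, rpow_add hx (-(c + 2)), rpow_neg_one,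
      rpow_neg hx.le (c + 2), div_eq_mul_inv, mul_assoc]
  refine ⟨D, (hO.trans_isLittleO hinv).congr' ?_ EventuallyEq.rfl⟩
  filter_upwards [tendsto_log_atTop.eventually hs₂_eq, eventually_gt_atTop 0] with x hx hx₀
  change _ - s₂ (log x) * x ^ (-(c + 2)) = _
  rw [hx, rpow_neg hx₀.le (c + 2), div_eq_mul_inv]

theorem stmt14 (p q : Polynomial ℝ) (hq : q ≠ 0) (r : ℝ → ℝ)
    (hr : ∀ x, r x = p.eval x / q.eval x)
    (α : ℝ) (hα : 0 < α) (a : ℕ → ℝ)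
    (ha : ∀ n : ℕ, 1 ≤ n → a n = r (Real.log n) / (n : ℝ) ^ α) :
    ∃ C : ℝ,
      (fun n : ℕ => a (n + 1) + a (n - 1) - 2 * a n
          - (α * (α + 1) * r (Real.log n) - (2 * α + 1) * deriv r (Real.log n)
              + deriv (deriv r) (Real.log n)) / (n : ℝ) ^ (2 + α))
        =o[atTop] fun n : ℕ => (Real.log n) ^ C / (n : ℝ) ^ (2 + α) := by
  obtain ⟨D, hD⟩ := exists_isLittleO_secondDifference_comp_log_mul_rpow
    ⟨p, q, hq, Eventually.of_forall hr⟩ (show -3 ≤ α by linarith)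
  have ha' : ∀ n : ℕ, 1 ≤ n → a n = r (log n) * (n : ℝ) ^ (-α) := fun n hn => by
    rw [ha n hn, rpow_neg n.cast_nonneg, div_eq_mul_inv]
  refine ⟨D, (hD.comp_tendsto tendsto_natCast_atTop_atTop).congr' ?_ ?_⟩
  · filter_upwards [eventually_ge_atTop 2] with n hn
    rw [Function.comp_apply, ha' (n + 1) (by omega), ha' (n - 1) (by omega), ha' n (by omega),
      Nat.cast_sub (by omega), Nat.cast_add_one, Nat.cast_one, add_comm (2 : ℝ)]
  · exact Eventually.of_forall fun n => by simp [add_comm (2 : ℝ)]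
end

section
/- For a_n = n^α with real α ≥ 2, the sequence {a_n}_{n≥1} is asymptotically ℓ-log-concave for every positive integer ℓ; in particular, for ℓ = 1 and ℓ = 2: the sequence b_n = a_n^2 - a_{n-1}a_{n+1} is eventually positive, and c_n = b_n^2 - b_{n-1}b_{n+1} is eventually positive. -/
/-!
If `x n = n ^ γ g(1 / n)` with `g` analytic at `0` and `g 0 > 0`, then, centering at `m = n + 1`
and putting `t = 1 / m`, `(φ x) n = m ^ (2γ) (g(t)² - (1 - t²) ^ γ g(t / (1 - t)) g(t / (1 + t)))`.
The bracket vanishes to second order at `t = 0`, with `t²`-coefficient `γ g(0)² > 0`, so `φ x` has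
an expansion of the same kind with exponent `2γ - 2`. Since `γ ↦ 2γ - 2` maps `[2, ∞)` into
itself, every iterate `φ^[ℓ] a` of `a n = n ^ α` has such an expansion and is therefore eventually
positive; `b` and `c` are shifts of `φ a` and `φ (φ a)`.
-/

open Real Filter

/-- The operator φ sending {x_n} to {x_{n+1}^2 - x_n x_{n+2}}. -/
def phi (x : ℕ → ℝ) : ℕ → ℝ := fun n => x (n + 1) ^ 2 - x n * x (n + 2)

open Topology

theorem AnalyticAt.exists_eq_add_mul {f : ℝ → ℝ} (hf : AnalyticAt ℝ f 0) :
    ∃ F : ℝ → ℝ, AnalyticAt ℝ F 0 ∧ F 0 = deriv f 0 ∧ ∀ t, f t = f 0 + t * F t := by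
  obtain ⟨p, hp⟩ := hf
  refine ⟨dslope f 0, ⟨p.fslope, hp.has_fpower_series_dslope_fslope⟩, dslope_same f 0,
    fun t => ?_⟩
  have := sub_smul_dslope f 0 t
  rw [sub_zero, smul_eq_mul] at this
  linarith

@[fun_prop]
theorem AnalyticAt.rpow_const {f : ℝ → ℝ} {x : ℝ} (hf : AnalyticAt ℝ f x) (hx : 0 < f x)
    (β : ℝ) : AnalyticAt ℝ (fun z => f z ^ β) x := by
  have hexp : AnalyticAt ℝ (fun z => rexp (Real.log (f z) * β)) x :=
    analyticAt_rexp.comp ((hf.log hx).mul analyticAt_const)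
  refine hexp.congr ?_
  filter_upwards [hf.continuousAt.eventually (eventually_gt_nhds hx)] with z hz
  rw [rpow_def_of_pos hz]

theorem exists_one_sub_rpow_eq (γ : ℝ) :
    ∃ D : ℝ → ℝ, AnalyticAt ℝ D 0 ∧ D 0 = γ ∧ ∀ s, (1 - s) ^ γ = 1 - s * D s := by
  have hf : AnalyticAt ℝ (fun s : ℝ => (1 - s) ^ γ) 0 := by fun_prop (disch := norm_num)
  obtain ⟨F, hF, hF₀, hfF⟩ := hf.exists_eq_add_mul
  have hderiv : HasDerivAt (fun s : ℝ => (1 - s) ^ γ) (-1 * γ * (1 - 0) ^ (γ - 1)) 0 :=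
    ((hasDerivAt_id (0 : ℝ)).const_sub 1).rpow_const (by norm_num)
  refine ⟨fun s => -F s, hF.neg, by simp [hF₀, hderiv.deriv], fun s => ?_⟩
  simp [hfF s]

theorem exists_sq_sub_rpow_mul_eq_sq_mul (γ : ℝ) {g : ℝ → ℝ} (hg : AnalyticAt ℝ g 0) :
    ∃ k : ℝ → ℝ, AnalyticAt ℝ k 0 ∧ k 0 = γ * g 0 ^ 2 ∧ ∀ t, |t| < 1 →
      g t ^ 2 - (1 - t ^ 2) ^ γ * (g (t / (1 - t)) * g (t / (1 + t))) = t ^ 2 * k t := by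
  obtain ⟨G, hG, -, hgG⟩ := hg.exists_eq_add_mul
  obtain ⟨H, hH, -, hGH⟩ := hG.exists_eq_add_mul
  obtain ⟨D, hD, hD₀, hpow⟩ := exists_one_sub_rpow_eq γ
  -- `fun_prop` composes only at the literal points `0 ^ 2`, `0 / (1 - 0)`, `0 / (1 + 0)`.
  have hD' : AnalyticAt ℝ D (0 ^ 2) := by simpa using hD
  have hg₁ : AnalyticAt ℝ g (0 / (1 - 0)) := by simpa using hg
  have hg₂ : AnalyticAt ℝ g (0 / (1 + 0)) := by simpa using hg
  have hG₁ : AnalyticAt ℝ G (0 / (1 - 0)) := by simpa using hG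
  have hG₂ : AnalyticAt ℝ G (0 / (1 + 0)) := by simpa using hG
  have hH₁ : AnalyticAt ℝ H (0 / (1 - 0)) := by simpa using hH
  have hH₂ : AnalyticAt ℝ H (0 / (1 + 0)) := by simpa using hH
  -- With `u = t / (1 - t)`, `v = t / (1 + t)`: `u + v = 2t + O(t³)`, `uv = t² + O(t⁴)` and
  -- `u² + v² = 2t² + O(t³)`, so `g(t)² - g(u) g(v) = O(t³)` and the `t²`-term of the bracket
  -- comes from `(1 - t²) ^ γ` alone.
  refine ⟨fun t => g 0 * (2 * H t - H (t / (1 - t)) / (1 - t) ^ 2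
      - H (t / (1 + t)) / (1 + t) ^ 2 - 2 * G 0 * t / (1 - t ^ 2)) + G t ^ 2
      - G (t / (1 - t)) * G (t / (1 + t)) / (1 - t ^ 2)
      + D (t ^ 2) * (g (t / (1 - t)) * g (t / (1 + t))),
    by fun_prop (disch := norm_num), ?_, ?_⟩
  · simp only [sub_zero, add_zero, div_one, one_pow, mul_zero, zero_pow two_ne_zero, hD₀]
    ring
  · intro t ht
    beta_reduce
    obtain ⟨ht₁, ht₂⟩ := abs_lt.mp ht
    have h₁ : 1 - t ≠ 0 := by linarith
    have h₂ : 1 + t ≠ 0 := by linarith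
    rw [hpow, hgG t, hgG (t / (1 - t)), hgG (t / (1 + t)), hGH t, hGH (t / (1 - t)),
      hGH (t / (1 + t)), show 1 - t ^ 2 = (1 - t) * (1 + t) by ring]
    field_simp
    ring

theorem sq_sub_mul_rpow_eq (γ : ℝ) (g : ℝ → ℝ) {m : ℝ} (hm : 1 < m) :
    (m ^ γ * g (1 / m)) ^ 2 - ((m - 1) ^ γ * g (1 / (m - 1))) * ((m + 1) ^ γ * g (1 / (m + 1)))
      = m ^ (2 * γ) * (g (1 / m) ^ 2 - (1 - (1 / m) ^ 2) ^ γ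
          * (g (1 / m / (1 - 1 / m)) * g (1 / m / (1 + 1 / m)))) := by
  have hm₀ : 0 < m := by linarith
  have hm₁ : 0 < m - 1 := by linarith
  have h₁ : 1 / m / (1 - 1 / m) = 1 / (m - 1) := by field_simp
  have h₂ : 1 / m / (1 + 1 / m) = 1 / (m + 1) := by field_simp
  have h₃ : (1 - (1 / m) ^ 2) ^ γ = (m - 1) ^ γ * (m + 1) ^ γ / (m ^ γ) ^ 2 := by
    rw [show 1 - (1 / m) ^ 2 = (m - 1) * (m + 1) / m ^ 2 by field_simp; ring,
      div_rpow (by positivity) (by positivity), mul_rpow hm₁.le (by positivity),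
      rpow_pow_comm hm₀.le]
  have h₄ : m ^ (2 * γ) = (m ^ γ) ^ 2 := by
    rw [mul_comm, ← Nat.cast_ofNat, rpow_mul_natCast hm₀.le]
  have : (m ^ γ) ^ 2 ≠ 0 := by positivity
  rw [h₁, h₂, h₃, h₄]
  field_simp

/-- `x n = n ^ γ * (c₀ + c₁ / n + c₂ / n ^ 2 + ⋯)` for large `n`, with `c₀ > 0` and a convergent
series. -/
def HasAnalyticExpansion (x : ℕ → ℝ) (γ : ℝ) : Prop :=
  ∃ g : ℝ → ℝ, AnalyticAt ℝ g 0 ∧ 0 < g 0 ∧ ∀ᶠ n : ℕ in atTop, x n = (n : ℝ) ^ γ * g (1 / n)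

namespace HasAnalyticExpansion

variable {x y : ℕ → ℝ} {γ : ℝ}

theorem congr (hx : HasAnalyticExpansion x γ) (h : x =ᶠ[atTop] y) : HasAnalyticExpansion y γ :=
  let ⟨g, hg, hg₀, hxg⟩ := hx
  ⟨g, hg, hg₀, h.symm.trans hxg⟩

theorem eventually_pos (hx : HasAnalyticExpansion x γ) : ∀ᶠ n in atTop, 0 < x n := by
  obtain ⟨g, hg, hg₀, hxg⟩ := hx
  have hlim : Tendsto (fun n : ℕ => g (1 / n)) atTop (𝓝 (g 0)) :=
    hg.continuousAt.tendsto.comp tendsto_one_div_atTop_nhds_zero_nat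
  filter_upwards [hxg, hlim.eventually (eventually_gt_nhds hg₀), eventually_gt_atTop 0]
    with n hn hgn hn₀
  rw [hn]
  exact mul_pos (rpow_pos_of_pos (Nat.cast_pos.mpr hn₀) γ) hgn

theorem comp_succ (hx : HasAnalyticExpansion x γ) :
    HasAnalyticExpansion (fun n => x (n + 1)) γ := by
  obtain ⟨g, hg, hg₀, hxg⟩ := hx
  have hg' : AnalyticAt ℝ g (0 / (1 + 0)) := by simpa using hg
  refine ⟨fun s => (1 + s) ^ γ * g (s / (1 + s)), by fun_prop (disch := norm_num), by simpa,
    ?_⟩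
  filter_upwards [(tendsto_add_atTop_nat 1).eventually hxg, eventually_gt_atTop 0]
    with n hn hn₀
  have hn₀' : (0 : ℝ) < n := Nat.cast_pos.mpr hn₀
  rw [hn, Nat.cast_succ, show 1 + 1 / (n : ℝ) = (n + 1) / n by field_simp,
    show 1 / (n : ℝ) / ((n + 1) / n) = 1 / (n + 1) by field_simp,
    div_rpow (by positivity) hn₀'.le]
  field_simp

theorem phi (hx : HasAnalyticExpansion x γ) (hγ : 0 < γ) :
    HasAnalyticExpansion (phi x) (2 * γ - 2) := by
  obtain ⟨g, hg, hg₀, hxg⟩ := hx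
  obtain ⟨k, hk, hk₀, hgk⟩ := exists_sq_sub_rpow_mul_eq_sq_mul γ hg
  have hy : HasAnalyticExpansion (fun m => (m : ℝ) ^ (2 * γ - 2) * k (1 / m)) (2 * γ - 2) :=
    ⟨k, hk, by rw [hk₀]; positivity, .of_forall fun _ => rfl⟩
  refine hy.comp_succ.congr ?_
  filter_upwards [hxg, (tendsto_add_atTop_nat 1).eventually hxg,
    (tendsto_add_atTop_nat 2).eventually hxg, eventually_gt_atTop 0] with n h₀ h₁ h₂ hn
  have hm : 1 < (n : ℝ) + 1 := by simpa using hn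
  have ht : |1 / ((n : ℝ) + 1)| < 1 := by
    rw [abs_of_pos (by positivity), div_lt_one (by positivity)]
    exact hm
  have hmid := sq_sub_mul_rpow_eq γ g hm
  rw [add_sub_cancel_right, add_assoc, one_add_one_eq_two] at hmid
  simp only [_root_.phi]
  push_cast at h₁ h₂ ⊢
  rw [h₀, h₁, h₂, hmid, hgk _ ht, rpow_sub (by positivity), rpow_two]
  field_simp

theorem iterate_phi (hx : HasAnalyticExpansion x γ) (hγ : 2 ≤ γ) (ℓ : ℕ) :
    HasAnalyticExpansion (_root_.phi^[ℓ] x) (2 ^ ℓ * (γ - 2) + 2) := by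
  induction ℓ with
  | zero => simpa using hx
  | succ ℓ ih =>
    rw [Function.iterate_succ_apply']
    convert ih.phi (by positivity) using 1
    ring

end HasAnalyticExpansion

theorem stmt16 (α : ℝ) (hα : 2 ≤ α) (a b c : ℕ → ℝ)
    (ha : ∀ n : ℕ, a n = (n : ℝ) ^ α)
    (hb : ∀ n : ℕ, 1 ≤ n → b n = (a n) ^ 2 - a (n - 1) * a (n + 1))
    (hc : ∀ n : ℕ, 1 ≤ n → c n = (b n) ^ 2 - b (n - 1) * b (n + 1)) :
    (∀ ℓ : ℕ, 1 ≤ ℓ → ∀ᶠ n : ℕ in atTop, 0 < (phi^[ℓ] a) n) ∧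
    (∀ᶠ n : ℕ in atTop, 0 < b n) ∧
    (∀ᶠ n : ℕ in atTop, 0 < c n) := by
  have ha' : HasAnalyticExpansion a α :=
    ⟨fun _ => 1, analyticAt_const, one_pos, .of_forall fun n => by rw [ha, mul_one]⟩
  have hpos (ℓ : ℕ) : ∀ᶠ n in atTop, 0 < (phi^[ℓ] a) n := (ha'.iterate_phi hα ℓ).eventually_pos
  have hb' (n : ℕ) : b (n + 1) = phi a n := by simp [hb, phi]
  have hc' (n : ℕ) : c (n + 2) = (phi^[2] a) n := by
    simp [hc, hb', phi]
  refine ⟨fun ℓ _ => hpos ℓ, ?_, ?_⟩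
  · rw [← map_add_atTop_eq_nat 1, eventually_map]
    simpa [hb'] using hpos 1
  · rw [← map_add_atTop_eq_nat 2, eventually_map]
    simpa [hc'] using hpos 2
end

section
/- The sequence a_n = 1/C_n, where C_n are the Catalan numbers, satisfies the higher order Turán inequality for all sufficiently large n: with u_n = a_{n-1}a_{n+1}/a_n^2 = (n+2)(2n-1)/((n+1)(2n+1)), one has 4(1-u_n)(1-u_{n+1}) - (1-u_n u_{n+1})^2 > 0 for all sufficiently large n. -/
/-! For the Catalan numbers the ratio `u_n` is an explicit rational function of `n`, coming from
`(n + 2) C_{n+1} = 2 (2n + 1) C_n`, and the higher order Turán expression in `u_n, u_{n+1}`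
collapses to `36 / ((n + 1)^2 (2n + 1) (n + 2) (2n + 3)^2)`, which is positive for every `n ≥ 0`. -/

open Real Filter

theorem succ_succ_mul_catalan_succ (n : ℕ) :
    (n + 2) * catalan (n + 1) = 2 * (2 * n + 1) * catalan n := by
  have hbinom := Nat.succ_mul_centralBinom_succ n
  rw [← succ_mul_catalan_eq_centralBinom, ← succ_mul_catalan_eq_centralBinom] at hbinom
  apply Nat.eq_of_mul_eq_mul_left n.succ_pos
  linarith

theorem cast_catalan_eq_centralBinom_div (n : ℕ) :
    (catalan n : ℝ) = Nat.centralBinom n / ((n : ℝ) + 1) := by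
  rw [← succ_mul_catalan_eq_centralBinom]
  push_cast
  field_simp

theorem catalan_pos (n : ℕ) : 0 < catalan n :=
  Nat.pos_of_mul_pos_left ((succ_mul_catalan_eq_centralBinom n).symm ▸ n.centralBinom_pos)

/-- The ratio `u_n = a_{n-1} a_{n+1} / a_n^2` for `a_n = 1 / C_n`. -/
noncomputable def catalanRatio (x : ℝ) : ℝ :=
  (x + 2) * (2 * x - 1) / ((x + 1) * (2 * x + 1))

theorem catalan_sq_div_catalan_mul_catalan (n : ℕ) (hn : 1 ≤ n) :
    (catalan n : ℝ) ^ 2 / (catalan (n - 1) * catalan (n + 1)) = catalanRatio n := by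
  obtain ⟨m, rfl⟩ : ∃ m, n = m + 1 := ⟨n - 1, by omega⟩
  have hrec₀ : ((m : ℝ) + 2) * catalan (m + 1) = 2 * (2 * m + 1) * catalan m := by
    exact_mod_cast succ_succ_mul_catalan_succ m
  have hrec₁ : ((m : ℝ) + 3) * catalan (m + 2) = 2 * (2 * m + 3) * catalan (m + 1) := by
    exact_mod_cast succ_succ_mul_catalan_succ (m + 1)
  have hpos₀ : (0 : ℝ) < catalan m := by exact_mod_cast catalan_pos m
  have hpos₁ : (0 : ℝ) < catalan (m + 1) := by exact_mod_cast catalan_pos (m + 1)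
  have hpos₂ : (0 : ℝ) < catalan (m + 2) := by exact_mod_cast catalan_pos (m + 2)
  rw [Nat.add_sub_cancel, catalanRatio, div_eq_div_iff (by positivity) (by positivity)]
  push_cast
  linear_combination (2 * (m : ℝ) + 3) * catalan (m + 1) * hrec₀
    - (2 * (m : ℝ) + 1) * catalan m * hrec₁

theorem higherTuran_catalanRatio_eq (x : ℝ) (hx : 0 ≤ x) :
    4 * (1 - catalanRatio x) * (1 - catalanRatio (x + 1))
        - (1 - catalanRatio x * catalanRatio (x + 1)) ^ 2
      = 36 / ((x + 1) ^ 2 * (2 * x + 1) * (x + 2) * (2 * x + 3) ^ 2) := by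
  unfold catalanRatio
  field_simp
  ring

theorem stmt18 (C a u : ℕ → ℝ)
    (hC : ∀ n : ℕ, C n = (1 / ((n : ℝ) + 1)) * (Nat.choose (2 * n) n : ℝ))
    (ha : ∀ n, a n = 1 / C n)
    (hu : ∀ n : ℕ, 1 ≤ n → u n = a (n - 1) * a (n + 1) / (a n) ^ 2) :
    (∀ n : ℕ, 1 ≤ n →
      u n = ((n : ℝ) + 2) * (2 * (n : ℝ) - 1) / (((n : ℝ) + 1) * (2 * (n : ℝ) + 1))) ∧
    ∀ᶠ n : ℕ in atTop,
      0 < 4 * (1 - u n) * (1 - u (n + 1)) - (1 - u n * u (n + 1)) ^ 2 := by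
  have hCatalan : ∀ n, C n = catalan n := fun n => by
    rw [hC, cast_catalan_eq_centralBinom_div, Nat.centralBinom, one_div_mul_eq_div]
  have hRatio : ∀ n : ℕ, 1 ≤ n → u n = catalanRatio n := fun n hn => by
    rw [hu n hn, ha, ha, ha, hCatalan, hCatalan, hCatalan,
      ← catalan_sq_div_catalan_mul_catalan n hn]
    field_simp
  refine ⟨hRatio, ?_⟩
  filter_upwards [eventually_ge_atTop 1] with n hn
  rw [hRatio n hn, hRatio (n + 1) (by omega), Nat.cast_succ,
    higherTuran_catalanRatio_eq n n.cast_nonneg]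
  positivity
end
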